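/- arXiv:2307.00780 — 3 statements merged into one kernel-verified Lean document; each statement's English description precedes it below -/
import Mathlib

section
/- Let f: ℝⁿ → ℝ ∪ {+∞} be a proper, lsc, icc function associated with f̄, where dom f is closed, f̄ is lsc on ℝⁿ × dom f, bounded from below on dom f × dom f, and continuous relative to int(dom f) × int(dom f), and let γ_k ↓ 0 with the approximating sequence f^k = g_{γ_k} − h_{γ_k} + δ_{dom f} given by the partial Moreau envelope. Then for every x̄ ∈ int(dom f): ∂_A f(x̄) ⊂ ∂₁f̄(x̄, x̄) − ∂₂(−f̄)(x̄, x̄) and ∂_A^∞ f(x̄) = {0}, where ∂₁f̄(·,x) and ∂₂(−f̄)(z,·) denote the convex subdifferentials of the convex functions f̄(·,x) and (−f̄)(z,·). -/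
open Filter Topology Metric Set
open scoped Pointwise RealInnerProductSpace Classical

noncomputable section

/-- Euclidean space ℝⁿ. -/
abbrev En (n : ℕ) := EuclideanSpace ℝ (Fin n)

/-- Outer limit (Painlevé–Kuratowski upper limit) of a sequence of sets. -/
def OuterLim {α : Type*} [TopologicalSpace α] (C : ℕ → Set α) : Set α :=
  {u | ∃ N : ℕ → ℕ, StrictMono N ∧ ∃ w : ℕ → α, (∀ j, w j ∈ C (N j)) ∧
        Tendsto w atTop (nhds u)}

/-- Horizon outer limit of a sequence of sets. -/
def HorizonLim {α : Type*} [NormedAddCommGroup α] [NormedSpace ℝ α] (C : ℕ → Set α) : Set α :=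
  insert 0 {u | ∃ N : ℕ → ℕ, StrictMono N ∧ ∃ lam : ℕ → ℝ, (∀ j, 0 < lam j) ∧
      Antitone lam ∧ Tendsto lam atTop (nhds 0) ∧ ∃ w : ℕ → α, (∀ j, w j ∈ C (N j)) ∧
      Tendsto (fun j => lam j • w j) atTop (nhds u)}

/-- Convex subdifferential of an extended-real-valued function on ℝⁿ
(empty outside of the effective domain). -/
def eSubdiff {n : ℕ} (g : En n → EReal) (x : En n) : Set (En n) :=
  {v | g x ≠ ⊤ ∧ ∀ y, g x + ((⟪v, y - x⟫ : ℝ) : EReal) ≤ g y}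

/-- Effective domain of an extended-real-valued function on ℝⁿ. -/
def edom {n : ℕ} (f : En n → EReal) : Set (En n) := {x | f x < ⊤}

/-- Properness of an extended-real-valued function on ℝⁿ. -/
def ProperE {n : ℕ} (f : En n → EReal) : Prop := (∃ x, f x < ⊤) ∧ ∀ x, f x ≠ ⊥

/-- Convexity of an extended-real-valued function on ℝⁿ. -/
def EConvexFn {n : ℕ} (g : En n → EReal) : Prop :=
  ∀ x y : En n, ∀ a b : ℝ, 0 ≤ a → 0 ≤ b → a + b = 1 →
    g (a • x + b • y) ≤ (a : EReal) * g x + (b : EReal) * g y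

/-- `fk` is DC on its domain with DC decomposition `g - h`. -/
structure IsDCDecomp {n : ℕ} (fk g h : En n → EReal) : Prop where
  proper_fk : ProperE fk
  proper_g : ProperE g
  lsc_g : LowerSemicontinuous g
  convex_g : EConvexFn g
  proper_h : ProperE h
  lsc_h : LowerSemicontinuous h
  convex_h : EConvexFn h
  dom_eq : edom fk = edom g ∩ edom h
  eq_on : ∀ x ∈ edom fk, fk x = g x - h x

/-- Pointwise convergence of extended-real-valued functions. -/
def PtConv {n : ℕ} (fk : ℕ → En n → EReal) (f : En n → EReal) : Prop :=
  ∀ x, Tendsto (fun k => fk k x) atTop (nhds (f x))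

/-- Epi-convergence of extended-real-valued functions. -/
def EpiConv {n : ℕ} (fk : ℕ → En n → EReal) (f : En n → EReal) : Prop :=
  ∀ x : En n,
    (∀ xk : ℕ → En n, Tendsto xk atTop (nhds x) →
      f x ≤ Filter.liminf (fun k => fk k (xk k)) atTop) ∧
    (∃ xk : ℕ → En n, Tendsto xk atTop (nhds x) ∧
      Filter.limsup (fun k => fk k (xk k)) atTop ≤ f x)

/-- Continuous convergence of extended-real-valued functions. -/
def ContConv {n : ℕ} (fk : ℕ → En n → EReal) (f : En n → EReal) : Prop :=
  ∀ x : En n, ∀ xk : ℕ → En n, Tendsto xk atTop (nhds x) →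
    Tendsto (fun k => fk k (xk k)) atTop (nhds (f x))

/-- The approximate subdifferential of an ADC function, associated with extended-real-valued
DC decomposition sequences `g`, `h`. -/
def eApproxSubdiff {n : ℕ} (g h : ℕ → En n → EReal) (xb : En n) : Set (En n) :=
  {v | ∃ xk : ℕ → En n, Tendsto xk atTop (nhds xb) ∧
        v ∈ OuterLim (fun k => eSubdiff (g k) (xk k) - eSubdiff (h k) (xk k))}

/-- The approximate horizon subdifferential, extended-real-valued decompositions. -/
def eApproxHorSubdiff {n : ℕ} (g h : ℕ → En n → EReal) (xb : En n) : Set (En n) :=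
  {v | ∃ xk : ℕ → En n, Tendsto xk atTop (nhds xb) ∧
        v ∈ HorizonLim (fun k => eSubdiff (g k) (xk k) - eSubdiff (h k) (xk k))}

/-- `f` is implicitly convex-concave (icc) associated with the lifted function `fb`. -/
structure IsICC {n : ℕ} (f : En n → EReal) (fb : En n → En n → EReal) : Prop where
  top_of_not_mem : ∀ z x : En n, z ∉ edom f → fb z x = ⊤
  bot_of_mem : ∀ z x : En n, z ∈ edom f → x ∉ edom f → fb z x = ⊥
  convex_fst : ∀ x ∈ edom f, EConvexFn (fun z => fb z x)
  concave_snd : ∀ z ∈ edom f, EConvexFn (fun x => -(fb z x))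
  diag : ∀ x ∈ edom f, f x = fb x x

/-- The convex part `g_γ(x) = ‖x‖²/(2γ)` of the partial Moreau envelope. -/
def pmeG {n : ℕ} (γ : ℝ) (x : En n) : EReal := ((‖x‖ ^ 2 / (2 * γ) : ℝ) : EReal)

/-- The concave part `h_γ(x) = sup_z {-f̄(z,x) - ‖z‖²/(2γ) + ⟨z,x⟩/γ}` of the partial
Moreau envelope. -/
def pmeH {n : ℕ} (fb : En n → En n → EReal) (γ : ℝ) (x : En n) : EReal :=
  ⨆ z : En n, (-(fb z x) + ((-(‖z‖ ^ 2) / (2 * γ) + ⟪z, x⟫ / γ : ℝ) : EReal))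

/-- The approximating functions `f^k = g_{γ} - h_{γ} + δ_{dom f}`. -/

def pmeFk {n : ℕ} (f : En n → EReal) (fb : En n → En n → EReal) (γ : ℝ) (x : En n) : EReal :=
  if x ∈ edom f then pmeG γ x - pmeH fb γ x else ⊤

/-!
For `x` near `x̄` and a subgradient `w` of `h_γ` at `x`, compare the subgradient inequality of
`w` between `x` and `y = x - γ² d` with a `γ³`-maximizer `ζ` of the supremum defining `h_γ(y)`.
This bounds `⟪x / γ - w, d⟫` by `⟪(y - ζ) / γ - s, d⟫ + 2γ`, where `s` is a subgradient of
`-f̄(ζ, ·)` at `y`, and `(y - ζ) / γ` is an approximate subgradient of `f̄(·, y)` at `ζ` because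
`ζ` nearly minimizes `f̄(·, y) + ‖· - y‖² / (2γ)`. Convexity and local boundedness make `f̄`
Lipschitz near `(x̄, x̄)`, which keeps `‖y - ζ‖ = O(γ)` and both vectors bounded; along a
subsequence they converge to elements of `∂₁f̄(x̄, x̄)` and `∂₂(-f̄)(x̄, x̄)`. Boundedness gives
`∂_A^∞ f(x̄) = {0}`. As `∂₁f̄(x̄, x̄)` is compact, `∂₁f̄(x̄, x̄) - ∂₂(-f̄)(x̄, x̄)` is closed and
convex, so the bound in every direction `d` yields the inclusion by separation.
-/

open scoped NNReal

lemma ContinuousOn.isOpen_strictEpigraph {E : Type*} [TopologicalSpace E] {U : Set E}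
    {ψ : E → ℝ} (hψ : ContinuousOn ψ U) (hU : IsOpen U) :
    IsOpen {p : E × ℝ | p.1 ∈ U ∧ ψ p.1 < p.2} := by
  have h : {p : E × ℝ | p.1 ∈ U ∧ ψ p.1 < p.2} =
      U ×ˢ univ ∩ (fun p : E × ℝ => (ψ p.1, p.2)) ⁻¹' {q | q.1 < q.2} := by
    ext p
    simp
  rw [h]
  exact ((hψ.comp continuousOn_fst fun p hp => hp.1).prodMk continuousOn_snd).isOpen_inter_preimage
    (hU.prod isOpen_univ) (isOpen_lt continuous_fst continuous_snd)

lemma le_two_mul_add_one_mul_of_sq_le {r γ L : ℝ} (hL : 0 ≤ L) (hγ : 0 < γ) (hγ1 : γ ≤ 1 / 2)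
    (h : r ^ 2 ≤ 2 * γ * (L * r + γ ^ 3)) : r ≤ (2 * L + 1) * γ := by
  by_contra! hbig
  have hr0 : 0 < r := lt_of_le_of_lt (by positivity) hbig
  have h1 : (2 * L + 1) * γ * r < r * r := mul_lt_mul_of_pos_right hbig hr0
  have h2 : γ * γ ≤ γ * r := mul_le_mul_of_nonneg_left (by nlinarith) hγ.le
  have h3 : 2 * γ ^ 4 < γ ^ 2 := by
    have hγsq : γ ^ 2 ≤ 1 / 4 := by nlinarith
    nlinarith [pow_pos hγ 2]
  nlinarith

section ConvexAnalysis

variable {E : Type*} [NormedAddCommGroup E] [InnerProductSpace ℝ E]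

lemma norm_le_of_forall_inner_le {a : E} {L ε : ℝ} (hL : 0 ≤ L) (hε : 0 < ε)
    (h : ∀ v, ‖v‖ < ε → ⟪a, v⟫ ≤ L * ‖v‖) : ‖a‖ ≤ L := by
  rcases eq_or_ne a 0 with rfl | ha
  · simpa using hL
  have hna : 0 < ‖a‖ := norm_pos_iff.mpr ha
  have hv : ‖(ε / (2 * ‖a‖)) • a‖ = ε / 2 := by
    rw [norm_smul, Real.norm_of_nonneg (by positivity)]
    field_simp
  have := h _ (by rw [hv]; linarith)
  rw [real_inner_smul_right, real_inner_self_eq_norm_sq, hv] at this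
  have h2 : ε / (2 * ‖a‖) * ‖a‖ ^ 2 = ε / 2 * ‖a‖ := by field_simp
  nlinarith

lemma norm_le_of_forall_add_inner_le {U : Set E} {ψ : E → ℝ} (hU : IsOpen U) {L : ℝ≥0}
    (hL : LipschitzOnWith L ψ U) {y s : E} (hy : y ∈ U)
    (hs : ∀ q ∈ U, ψ y + ⟪s, q - y⟫ ≤ ψ q) : ‖s‖ ≤ L := by
  obtain ⟨ε, hε, hball⟩ := Metric.isOpen_iff.mp hU y hy
  refine norm_le_of_forall_inner_le L.coe_nonneg hε fun v hv => ?_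
  have hyv : y + v ∈ U := hball (by simpa using hv)
  have h1 := hs _ hyv
  have h2 := hL.dist_le_mul _ hyv _ hy
  rw [Real.dist_eq, dist_eq_norm, add_sub_cancel_left] at h2
  rw [add_sub_cancel_left] at h1
  linarith [le_abs_self (ψ (y + v) - ψ y)]

/-- The supporting hyperplane to the (open) strict epigraph at `(y, ψ y)` gives the subgradient. -/
lemma ConvexOn.exists_subgradient_of_lipschitzOnWith [CompleteSpace E] {U : Set E} {ψ : E → ℝ}
    (hU : IsOpen U) (hψ : ConvexOn ℝ U ψ) {L : ℝ≥0} (hL : LipschitzOnWith L ψ U) {y : E}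
    (hy : y ∈ U) : ∃ s : E, ‖s‖ ≤ L ∧ ∀ q ∈ U, ψ y + ⟪s, q - y⟫ ≤ ψ q := by
  obtain ⟨φ, hφ⟩ := geometric_hahn_banach_open_point (x := (y, ψ y)) hψ.convex_strict_epigraph
    (hL.continuousOn.isOpen_strictEpigraph hU) (by simp)
  set β := φ (0, 1)
  have hφ_apply : ∀ (a : E) (t : ℝ), φ (a, t) = φ (a, 0) + t * β := fun a t => by
    rw [show (a, t) = (a, 0) + t • ((0 : E), (1 : ℝ)) by simp, map_add, map_smul, smul_eq_mul]
  have hβ : β < 0 := by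
    have := hφ (y, ψ y + 1) ⟨hy, by linarith⟩
    rw [hφ_apply y (ψ y + 1), hφ_apply y (ψ y)] at this
    linarith
  set s := (InnerProductSpace.toDual ℝ E).symm ((-β)⁻¹ • φ.comp (ContinuousLinearMap.inl ℝ E ℝ))
  have hs : ∀ v, ⟪s, v⟫ = (-β)⁻¹ * φ (v, 0) := fun v => by
    simp [s, real_inner_smul_left, InnerProductSpace.toDual_symm_apply]
  have hsub : ∀ q ∈ U, ψ y + ⟪s, q - y⟫ ≤ ψ q := by
    intro q hq
    have key : φ (q - y, 0) ≤ -β * (ψ q - ψ y) := by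
      refine le_of_forall_pos_lt_add fun ε hε => ?_
      have hεβ : 0 < ε / -β := div_pos hε (neg_pos.mpr hβ)
      have := hφ (q, ψ q + ε / -β) ⟨hq, by linarith⟩
      rw [hφ_apply, hφ_apply y] at this
      have hεβ' : ε / -β * β = -ε := by field_simp [hβ.ne]
      rw [show ((q - y, 0) : E × ℝ) = (q, 0) - (y, 0) by simp, map_sub]
      nlinarith
    have := (inv_mul_le_iff₀ (neg_pos.mpr hβ)).mpr key
    rw [hs]
    linarith
  exact ⟨s, norm_le_of_forall_add_inner_le hU hL hy hsub, hsub⟩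

/-- Test the near-minimality of `ζ` at the point `ζ + τ • (z - ζ)`. -/
lemma ConvexOn.add_inner_le_of_almost_prox {C : Set E} {φ : E → ℝ} (hφ : ConvexOn ℝ C φ)
    {y ζ z : E} {γ ε τ : ℝ} (hτ : 0 < τ) (hτ1 : τ ≤ 1) (hζ : ζ ∈ C) (hz : z ∈ C)
    (hmin : ∀ z' ∈ C, φ ζ + ‖ζ - y‖ ^ 2 / (2 * γ) ≤ φ z' + ‖z' - y‖ ^ 2 / (2 * γ) + ε) :
    φ ζ + ⟪γ⁻¹ • (y - ζ), z - ζ⟫ - τ * ‖z - ζ‖ ^ 2 / (2 * γ) - ε / τ ≤ φ z := by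
  have hmid := hmin _ (hφ.1 hζ hz (by linarith) hτ.le (sub_add_cancel 1 τ))
  have hconv := hφ.2 hζ hz (by linarith) hτ.le (sub_add_cancel 1 τ)
  have hnorm : ‖(1 - τ) • ζ + τ • z - y‖ ^ 2 =
      ‖ζ - y‖ ^ 2 + 2 * (τ * ⟪ζ - y, z - ζ⟫) + (τ * ‖z - ζ‖) ^ 2 := by
    rw [show (1 - τ) • ζ + τ • z - y = (ζ - y) + τ • (z - ζ) by module, norm_add_sq_real,
      real_inner_smul_right, norm_smul, Real.norm_of_nonneg hτ.le]
  rw [hnorm] at hmid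
  simp only [smul_eq_mul] at hconv
  rw [real_inner_smul_left, ← neg_sub ζ y, inner_neg_left]
  refine le_of_mul_le_mul_left ?_ hτ
  have hετ : τ * (ε / τ) = ε := by field_simp
  linear_combination hmid + hconv - hετ

/-- In use, `Hx` and `Hy` are the values of `h_γ` at `x` and `y = x - t • d`, `w` is a subgradient
of `h_γ` at `x`, `ζ` an `ε`-maximizer of the supremum defining `h_γ(y)`, `φx` and `φy` are the
values of `f̄(ζ, ·)` at `x` and `y`, and `s` is a subgradient of `-f̄(ζ, ·)` at `y`. -/
lemma inner_le_of_almost_max {x d w s ζ : E} {γ t ε Hx Hy φx φy : ℝ} (hγ : 0 < γ) (ht : 0 < t)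
    (hw : Hx + ⟪w, (x - t • d) - x⟫ ≤ Hy)
    (hy : Hy ≤ ‖x - t • d‖ ^ 2 / (2 * γ) - φy - ‖ζ - (x - t • d)‖ ^ 2 / (2 * γ) + ε)
    (hx : ‖x‖ ^ 2 / (2 * γ) - φx - ‖ζ - x‖ ^ 2 / (2 * γ) ≤ Hx)
    (hs : -φy + ⟪s, x - (x - t • d)⟫ ≤ -φx) :
    ⟪γ⁻¹ • x - w, d⟫ ≤ ⟪γ⁻¹ • ((x - t • d) - ζ) - s, d⟫ + t * ‖d‖ ^ 2 / γ + ε / t := by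
  have hnorm : ‖x - t • d‖ ^ 2 / (2 * γ) - ‖ζ - (x - t • d)‖ ^ 2 / (2 * γ) =
      ‖x‖ ^ 2 / (2 * γ) - ‖ζ - x‖ ^ 2 / (2 * γ) - t * ⟪ζ, d⟫ / γ := by
    rw [show ζ - (x - t • d) = (ζ - x) + t • d by abel, norm_add_sq_real, norm_sub_sq_real,
      inner_smul_right, inner_smul_right, inner_sub_left, norm_smul, Real.norm_of_nonneg ht.le]
    field_simp
    ring
  rw [sub_sub_cancel_left, inner_neg_right, real_inner_smul_right] at hw
  rw [sub_sub_cancel, real_inner_smul_right] at hs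
  have hkey : ⟪ζ, d⟫ / γ + ⟪s, d⟫ - ε / t ≤ ⟪w, d⟫ := by
    refine le_of_mul_le_mul_left ?_ ht
    have hεt : t * (ε / t) = ε := by field_simp
    linear_combination hw + hy + hx + hs + hnorm - hεt
  simp only [inner_sub_left, real_inner_smul_left, real_inner_self_eq_norm_sq]
  linear_combination hkey

lemma sub_smul_mem_ball {c x d : E} {r t : ℝ} (hx : x ∈ ball c r) (ht : 0 ≤ t) (hd : ‖d‖ ≤ 1) :
    x - t • d ∈ ball c (r + t) := by
  rw [mem_ball, dist_eq_norm] at hx ⊢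
  calc ‖x - t • d - c‖ ≤ ‖x - c‖ + ‖t • d‖ := by
        rw [sub_right_comm]
        exact norm_sub_le _ _
    _ < r + t := by
        rw [norm_smul, Real.norm_of_nonneg ht]
        nlinarith [mul_le_of_le_one_right ht hd]

lemma mem_of_forall_exists_inner_le [CompleteSpace E] {T : Set E} (hT : IsClosed T)
    (hTc : Convex ℝ T) {u : E} (h : ∀ d : E, ‖d‖ ≤ 1 → ∃ p ∈ T, ⟪u, d⟫ ≤ ⟪p, d⟫) : u ∈ T := by
  by_contra hu
  obtain ⟨φ, c, hφT, hφu⟩ := geometric_hahn_banach_closed_point hTc hT hu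
  set d := (InnerProductSpace.toDual ℝ E).symm φ
  have hd : ∀ q, ⟪q, d⟫ = φ q := fun q => by
    rw [real_inner_comm]; simp [d, InnerProductSpace.toDual_symm_apply]
  have hscale : ‖(‖d‖ + 1)⁻¹ • d‖ ≤ 1 := by
    rw [norm_smul, norm_inv, Real.norm_of_nonneg (by positivity), inv_mul_le_one₀ (by positivity)]
    linarith
  obtain ⟨p, hp, hup⟩ := h _ hscale
  rw [real_inner_smul_right, real_inner_smul_right, hd, hd,
    mul_le_mul_iff_of_pos_left (by positivity)] at hup
  linarith [hφT p hp]

end ConvexAnalysis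

section

variable {n : ℕ}

lemma EConvexFn.convexOn_toReal {g : En n → EReal} (hg : EConvexFn g) {s : Set (En n)}
    (hs : Convex ℝ s) (hfin : ∀ x ∈ s, ((g x).toReal : EReal) = g x) :
    ConvexOn ℝ s fun x => (g x).toReal := by
  refine ⟨hs, fun x hx y hy a b ha hb hab => ?_⟩
  have h := hg x y a b ha hb hab
  rw [← hfin _ (hs hx hy ha hb hab), ← hfin x hx, ← hfin y hy, ← EReal.coe_mul, ← EReal.coe_mul,
    ← EReal.coe_add, EReal.coe_le_coe_iff] at h
  simpa using h

/-- Compare `g z` with the value of `g` at a point of the segment `[x, z]` close to `x`. -/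
lemma EConvexFn.mem_eSubdiff_of_forall_mem_ball {g : En n → EReal} (hg : EConvexFn g)
    {x v : En n} {c ρ : ℝ} (hx : g x = c) (hρ : 0 < ρ)
    (hloc : ∀ z ∈ ball x ρ, ((c + ⟪v, z - x⟫ : ℝ) : EReal) ≤ g z) : v ∈ eSubdiff g x := by
  refine ⟨by simp [hx], fun z => ?_⟩
  have hnear : ∀ᶠ t in 𝓝 (0 : ℝ), x + t • (z - x) ∈ ball x ρ ∧ t < 1 :=
    ((Continuous.tendsto (by fun_prop : Continuous fun t : ℝ => x + t • (z - x)) 0).eventually_mem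
      (by simpa using ball_mem_nhds x hρ)).and (eventually_lt_nhds one_pos)
  obtain ⟨t, ⟨hzt, ht1⟩, ht0⟩ :=
    ((hnear.filter_mono (nhdsWithin_le_nhds (s := Ioi 0))).and self_mem_nhdsWithin).exists
  have ht0 : (0 : ℝ) < t := ht0
  have hconv := hg z x t (1 - t) ht0.le (by linarith) (by ring)
  rw [show t • z + (1 - t) • x = x + t • (z - x) by module, hx] at hconv
  have hlocal := (hloc _ hzt).trans hconv
  rw [add_sub_cancel_left, real_inner_smul_right] at hlocal
  rw [hx, ← EReal.coe_add]
  induction hgz : g z using EReal.rec with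
  | bot =>
    rw [hgz, EReal.coe_mul_bot_of_pos ht0, EReal.bot_add] at hlocal
    exact absurd (le_bot_iff.mp hlocal) (EReal.coe_ne_bot _)
  | coe r =>
    rw [hgz, ← EReal.coe_mul, ← EReal.coe_mul, ← EReal.coe_add, EReal.coe_le_coe_iff] at hlocal
    rw [EReal.coe_le_coe_iff]
    nlinarith
  | top => exact le_top

lemma isClosed_eSubdiff (g : En n → EReal) (x : En n) : IsClosed (eSubdiff g x) := by
  simp only [eSubdiff, Set.ofPred_and]
  refine isClosed_const.inter ?_
  rw [Set.ofPred_forall]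
  refine isClosed_iInter fun y => ?_
  refine isClosed_le ?_ continuous_const
  refine continuous_iff_continuousAt.2 fun v => ?_
  exact (EReal.continuousAt_add (Or.inr (EReal.coe_ne_bot _)) (Or.inr (EReal.coe_ne_top _))).comp
    (continuousAt_const.prodMk (continuous_coe_real_ereal.comp (by fun_prop)).continuousAt)

lemma convex_eSubdiff (g : En n → EReal) (x : En n) : Convex ℝ (eSubdiff g x) := by
  rintro v₁ ⟨hx, h₁⟩ v₂ ⟨-, h₂⟩ a b ha hb hab
  refine ⟨hx, fun y => ?_⟩
  rw [inner_add_left, real_inner_smul_left, real_inner_smul_left]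
  induction hgx : g x using EReal.rec with
  | bot => simp
  | top => exact absurd hgx hx
  | coe c =>
    have h₁ := h₁ y
    have h₂ := h₂ y
    rw [hgx] at h₁ h₂
    induction hgy : g y using EReal.rec with
    | bot =>
      rw [hgy, ← EReal.coe_add] at h₁
      exact absurd (le_bot_iff.mp h₁) (EReal.coe_ne_bot _)
    | top => exact le_top
    | coe d =>
      rw [hgy, ← EReal.coe_add, EReal.coe_le_coe_iff] at h₁ h₂
      rw [← EReal.coe_add, EReal.coe_le_coe_iff]
      have hc : c = a * c + b * c := by rw [← add_mul, hab, one_mul]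
      have hd : d = a * d + b * d := by rw [← add_mul, hab, one_mul]
      nlinarith [mul_le_mul_of_nonneg_left h₁ ha, mul_le_mul_of_nonneg_left h₂ hb]

lemma eq_inv_smul_of_mem_eSubdiff_pmeG {γ : ℝ} (hγ : 0 < γ) {x v : En n}
    (hv : v ∈ eSubdiff (pmeG γ) x) : v = γ⁻¹ • x := by
  set δ := v - γ⁻¹ • x
  have h := hv.2 (x + γ • δ)
  rw [pmeG, pmeG, ← EReal.coe_add, EReal.coe_le_coe_iff, add_sub_cancel_left,
    real_inner_smul_right, norm_add_sq_real, real_inner_smul_right, norm_smul,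
    Real.norm_of_nonneg hγ.le] at h
  have hvδ : ⟪v, δ⟫ = ‖δ‖ ^ 2 + γ⁻¹ * ⟪x, δ⟫ := by
    rw [← real_inner_self_eq_norm_sq, ← real_inner_smul_left, ← inner_add_left]
    simp [δ]
  rw [hvδ] at h
  have hδ : ‖δ‖ ^ 2 ≤ 0 := by
    field_simp at h
    nlinarith [pow_pos hγ 2]
  rw [← sub_eq_zero, ← norm_eq_zero]
  exact pow_eq_zero_iff two_ne_zero |>.mp (le_antisymm hδ (sq_nonneg _))

lemma pmeH_eq_iSup (fb : En n → En n → EReal) (γ : ℝ) (x : En n) :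
    pmeH fb γ x = ⨆ z, -fb z x + ((‖x‖ ^ 2 / (2 * γ) - ‖z - x‖ ^ 2 / (2 * γ) : ℝ) : EReal) := by
  unfold pmeH
  congr! 4 with z
  rw [norm_sub_sq_real]
  ring

lemma pmeH_le {f : En n → EReal} {fb : En n → En n → EReal} (hicc : IsICC f fb) {M : ℝ}
    (hM : ∀ z ∈ edom f, ∀ x ∈ edom f, (M : EReal) ≤ fb z x) {γ : ℝ} (hγ : 0 < γ) {x : En n}
    (hx : x ∈ edom f) : pmeH fb γ x ≤ ((‖x‖ ^ 2 / (2 * γ) - M : ℝ) : EReal) := by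
  rw [pmeH_eq_iSup]
  refine iSup_le fun z => ?_
  by_cases hz : z ∈ edom f
  · calc -fb z x + ((‖x‖ ^ 2 / (2 * γ) - ‖z - x‖ ^ 2 / (2 * γ) : ℝ) : EReal)
        ≤ ((-M : ℝ) : EReal) + ((‖x‖ ^ 2 / (2 * γ) : ℝ) : EReal) := by
          gcongr
          · exact EReal.neg_le_neg_iff.mpr (hM z hz x hx) |>.trans_eq (EReal.coe_neg M).symm
          · exact sub_le_self _ (by positivity)
      _ = _ := by rw [← EReal.coe_add]; ring_nf
  · simp [hicc.top_of_not_mem z x hz]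

structure IccBallBounds (f : En n → EReal) (fb : En n → En n → EReal) (xb : En n) (ρ K M : ℝ) :
    Prop where
  pos : 0 < ρ
  icc : IsICC f fb
  lower : ∀ z ∈ edom f, ∀ x ∈ edom f, (M : EReal) ≤ fb z x
  ball_subset : ball xb ρ ⊆ edom f
  upper : ∀ z ∈ ball xb ρ, ∀ x ∈ ball xb ρ, fb z x ≤ K

/-- `γ⁻¹ • x - w` is, in the direction `d` and up to `2γ`, the difference of
`γ⁻¹ • (y - ζ)`, an approximate subgradient of `fb (·) y` at `ζ`, and `s`, a subgradient of
`-fb ζ (·)` at `y`. It is used with `y = x - γ² • d`. -/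
structure ApproxSplit (fb : En n → En n → EReal) (xb : En n) (ρ : ℝ) (L : ℝ≥0)
    (γ : ℝ) (x y w d ζ s : En n) : Prop where
  dist_le : ‖y - ζ‖ ≤ (2 * L + 1) * γ
  norm_le : ‖s‖ ≤ L
  approx_subgrad_fst : ∀ z ∈ ball xb ρ, (fb ζ y).toReal + ⟪γ⁻¹ • (y - ζ), z - ζ⟫ -
    γ * (‖z - ζ‖ ^ 2 / 2 + 1) ≤ (fb z y).toReal
  subgrad_snd : ∀ q ∈ ball xb ρ, -(fb ζ y).toReal + ⟪s, q - y⟫ ≤ -(fb ζ q).toReal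
  inner_le : ⟪γ⁻¹ • x - w, d⟫ ≤ ⟪γ⁻¹ • (y - ζ) - s, d⟫ + 2 * γ

variable {f : En n → EReal} {fb : En n → En n → EReal} {xb : En n} {ρ K M : ℝ} {L : ℝ≥0}

lemma ApproxSplit.norm_inv_smul_sub_le {γ : ℝ} {x y w d ζ s : En n} (h : ApproxSplit fb xb ρ L γ x y w d ζ s) (hγ : 0 < γ) :
    ‖γ⁻¹ • (y - ζ)‖ ≤ 2 * L + 1 := by
  rw [norm_smul, norm_inv, Real.norm_of_nonneg hγ.le, inv_mul_le_iff₀ hγ, mul_comm]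
  exact h.dist_le

lemma tendsto_of_eventually_approxSplit {γ : ℕ → ℝ} {x w d ζ s : ℕ → En n}
    (hγ : Tendsto γ atTop (𝓝 0)) (hx : Tendsto x atTop (𝓝 xb)) (hd : ∀ k, ‖d k‖ ≤ 1)
    (h : ∀ᶠ k in atTop, ApproxSplit fb xb ρ L (γ k) (x k) (x k - γ k ^ 2 • d k) (w k) (d k)
      (ζ k) (s k)) :
    Tendsto (fun k => x k - γ k ^ 2 • d k) atTop (𝓝 xb) ∧ Tendsto ζ atTop (𝓝 xb) := by
  have hstep : Tendsto (fun k => γ k ^ 2 • d k) atTop (𝓝 0) :=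
    squeeze_zero_norm (a := fun k => γ k ^ 2) (fun k => by
      rw [norm_smul, Real.norm_of_nonneg (sq_nonneg _)]
      exact mul_le_of_le_one_right (sq_nonneg _) (hd k)) (by simpa using hγ.pow 2)
  have hy : Tendsto (fun k => x k - γ k ^ 2 • d k) atTop (𝓝 xb) := by simpa using hx.sub hstep
  have hclose : Tendsto (fun k => x k - γ k ^ 2 • d k - ζ k) atTop (𝓝 0) :=
    squeeze_zero_norm' (h.mono fun k hk => hk.dist_le)
      (by simpa using hγ.const_mul (2 * (L : ℝ) + 1))
  exact ⟨hy, by simpa using hy.sub hclose⟩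

namespace IccBallBounds

/-- The constant that `ConvexOn.lipschitzOnWith_of_abs_le` gives on `B(xb, ρ / 2)` from
`|fb| ≤ |M| + |K|` on `B(xb, ρ)`. -/
def lip (ρ K M : ℝ) : ℝ≥0 := (2 * (|M| + |K|) / (ρ / 2)).toNNReal

lemma coe_toReal (S : IccBallBounds f fb xb ρ K M) {z x : En n} (hz : z ∈ ball xb ρ)
    (hx : x ∈ ball xb ρ) : ((fb z x).toReal : EReal) = fb z x :=
  EReal.coe_toReal (ne_top_of_le_ne_top (EReal.coe_ne_top K) (S.upper z hz x hx))
    (ne_bot_of_le_ne_bot (EReal.coe_ne_bot M) (S.lower z (S.ball_subset hz) x (S.ball_subset hx)))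

lemma le_toReal (S : IccBallBounds f fb xb ρ K M) {z x : En n} (hz : z ∈ ball xb ρ)
    (hx : x ∈ ball xb ρ) : M ≤ (fb z x).toReal := by
  have := S.lower z (S.ball_subset hz) x (S.ball_subset hx)
  rwa [← S.coe_toReal hz hx, EReal.coe_le_coe_iff] at this

lemma toReal_le (S : IccBallBounds f fb xb ρ K M) {z x : En n} (hz : z ∈ ball xb ρ)
    (hx : x ∈ ball xb ρ) : (fb z x).toReal ≤ K := by
  have := S.upper z hz x hx
  rwa [← S.coe_toReal hz hx, EReal.coe_le_coe_iff] at this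

lemma abs_toReal_le (S : IccBallBounds f fb xb ρ K M) {z x : En n} (hz : z ∈ ball xb ρ)
    (hx : x ∈ ball xb ρ) : |(fb z x).toReal| ≤ |M| + |K| := by
  have h1 := S.le_toReal hz hx
  have h2 := S.toReal_le hz hx
  exact abs_le.mpr ⟨by linarith [neg_abs_le M, abs_nonneg K],
    by linarith [le_abs_self K, abs_nonneg M]⟩

lemma convexOn_fst (S : IccBallBounds f fb xb ρ K M) {x : En n} (hx : x ∈ ball xb ρ) :
    ConvexOn ℝ (ball xb ρ) fun z => (fb z x).toReal :=
  (S.icc.convex_fst x (S.ball_subset hx)).convexOn_toReal (convex_ball xb ρ)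
    fun _ hz => S.coe_toReal hz hx

lemma concaveOn_snd (S : IccBallBounds f fb xb ρ K M) {z : En n} (hz : z ∈ ball xb ρ) :
    ConcaveOn ℝ (ball xb ρ) fun x => (fb z x).toReal := by
  have := (S.icc.concave_snd z (S.ball_subset hz)).convexOn_toReal (convex_ball xb ρ)
    fun x hx => by rw [EReal.toReal_neg_eq, EReal.coe_neg, S.coe_toReal hz hx]
  simp only [EReal.toReal_neg_eq] at this
  exact neg_convexOn_iff.mp this

lemma lipschitzOnWith_fst (S : IccBallBounds f fb xb ρ K M) {x : En n} (hx : x ∈ ball xb ρ) :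
    LipschitzOnWith (lip ρ K M) (fun z => (fb z x).toReal) (ball xb (ρ / 2)) := by
  simpa [lip, sub_half] using (S.convexOn_fst hx).lipschitzOnWith_of_abs_le (half_pos S.pos)
    fun z hz => S.abs_toReal_le hz hx

lemma lipschitzOnWith_snd (S : IccBallBounds f fb xb ρ K M) {z : En n} (hz : z ∈ ball xb ρ) :
    LipschitzOnWith (lip ρ K M) (fun x => (fb z x).toReal) (ball xb (ρ / 2)) := by
  simpa [lip, sub_half] using (S.concaveOn_snd hz).lipschitzOnWith_of_abs_le (half_pos S.pos)
    fun x hx => S.abs_toReal_le hz hx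

lemma continuousOn (S : IccBallBounds f fb xb ρ K M) :
    ContinuousOn (fun p : En n × En n => (fb p.1 p.2).toReal)
      (ball xb (ρ / 2) ×ˢ ball xb (ρ / 2)) :=
  have hsub : ball xb (ρ / 2) ⊆ ball xb ρ := ball_subset_ball (by linarith [S.pos])
  continuousOn_prod_of_continuousOn_lipschitzOnWith _ (lip ρ K M)
    (fun _ hz => (S.lipschitzOnWith_snd (hsub hz)).continuousOn)
    (fun _ hx => S.lipschitzOnWith_fst (hsub hx))

lemma tendsto_toReal (S : IccBallBounds f fb xb ρ K M) {p q : ℕ → En n} {p₀ q₀ : En n}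
    (hp : Tendsto p atTop (𝓝 p₀)) (hq : Tendsto q atTop (𝓝 q₀)) (hp₀ : p₀ ∈ ball xb (ρ / 2))
    (hq₀ : q₀ ∈ ball xb (ρ / 2)) :
    Tendsto (fun k => (fb (p k) (q k)).toReal) atTop (𝓝 (fb p₀ q₀).toReal) :=
  ((S.continuousOn.continuousAt (prod_mem_nhds (isOpen_ball.mem_nhds hp₀)
    (isOpen_ball.mem_nhds hq₀))).tendsto.comp (hp.prodMk_nhds hq))

lemma term_le_pmeH (S : IccBallBounds f fb xb ρ K M) (γ : ℝ) {z x : En n} (hz : z ∈ ball xb ρ)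
    (hx : x ∈ ball xb ρ) :
    ((‖x‖ ^ 2 / (2 * γ) - (fb z x).toReal - ‖z - x‖ ^ 2 / (2 * γ) : ℝ) : EReal) ≤
      pmeH fb γ x := by
  rw [pmeH_eq_iSup]
  refine le_trans (le_of_eq ?_) (le_iSup _ z)
  conv_rhs => rw [← S.coe_toReal hz hx]
  rw [← EReal.coe_neg, ← EReal.coe_add]
  ring_nf

lemma coe_toReal_pmeH (S : IccBallBounds f fb xb ρ K M) {γ : ℝ} (hγ : 0 < γ) {x : En n}
    (hx : x ∈ ball xb ρ) : ((pmeH fb γ x).toReal : EReal) = pmeH fb γ x :=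
  EReal.coe_toReal
    (ne_top_of_le_ne_top (EReal.coe_ne_top _) (pmeH_le S.icc S.lower hγ (S.ball_subset hx)))
    (ne_bot_of_le_ne_bot (EReal.coe_ne_bot _) (S.term_le_pmeH γ hx hx))

lemma toReal_term_le_pmeH (S : IccBallBounds f fb xb ρ K M) {γ : ℝ} (hγ : 0 < γ) {z x : En n}
    (hz : z ∈ ball xb ρ) (hx : x ∈ ball xb ρ) :
    ‖x‖ ^ 2 / (2 * γ) - (fb z x).toReal - ‖z - x‖ ^ 2 / (2 * γ) ≤ (pmeH fb γ x).toReal := by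
  rw [← EReal.coe_le_coe_iff, S.coe_toReal_pmeH hγ hx]
  exact S.term_le_pmeH γ hz hx

lemma exists_almost_max (S : IccBallBounds f fb xb ρ K M) {γ ε : ℝ} (hγ : 0 < γ) (hε : 0 < ε)
    {y : En n} (hy : y ∈ ball xb ρ) :
    ∃ ζ, M ≤ (fb ζ y).toReal ∧
      (pmeH fb γ y).toReal ≤ ‖y‖ ^ 2 / (2 * γ) - (fb ζ y).toReal - ‖ζ - y‖ ^ 2 / (2 * γ) + ε := by
  have hH := S.coe_toReal_pmeH hγ hy
  set H := (pmeH fb γ y).toReal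
  have hlt : ((H - ε : ℝ) : EReal) < pmeH fb γ y := by
    rw [← hH, EReal.coe_lt_coe_iff]
    linarith
  rw [pmeH_eq_iSup] at hlt
  obtain ⟨ζ, hζ⟩ := lt_iSup_iff.mp hlt
  have hζtop : fb ζ y ≠ ⊤ := fun h => by simp [h] at hζ
  have hζdom : ζ ∈ edom f := by
    by_contra h
    exact hζtop (S.icc.top_of_not_mem ζ y h)
  have hMζ := S.lower ζ hζdom y (S.ball_subset hy)
  have hfin := EReal.coe_toReal hζtop (ne_bot_of_le_ne_bot (EReal.coe_ne_bot M) hMζ)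
  rw [← hfin, ← EReal.coe_neg, ← EReal.coe_add, EReal.coe_lt_coe_iff] at hζ
  rw [← hfin, EReal.coe_le_coe_iff] at hMζ
  exact ⟨ζ, hMζ, by linarith⟩

/-- The lower bound `M` gives `‖ζ - y‖² = O(γ)`, so `ζ` is close enough to `y` for the Lipschitz
bound, which improves this to `‖ζ - y‖ = O(γ)`. -/
lemma exists_almost_max_near (S : IccBallBounds f fb xb ρ K M) {γ : ℝ} (hγ : 0 < γ)
    (hγ1 : γ ≤ 1 / 2) (hγK : 32 * γ * (K - M + 1) ≤ ρ ^ 2) {y : En n}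
    (hy : y ∈ ball xb (ρ / 4)) :
    ∃ ζ ∈ ball xb (ρ / 2), ‖y - ζ‖ ≤ (2 * lip ρ K M + 1) * γ ∧ (pmeH fb γ y).toReal ≤
      ‖y‖ ^ 2 / (2 * γ) - (fb ζ y).toReal - ‖ζ - y‖ ^ 2 / (2 * γ) + γ ^ 3 := by
  have hρ := S.pos
  have hy₁ : y ∈ ball xb ρ := ball_subset_ball (by linarith) hy
  have hy₂ : y ∈ ball xb (ρ / 2) := ball_subset_ball (by linarith) hy
  obtain ⟨ζ, hMζ, hmax⟩ := S.exists_almost_max hγ (pow_pos hγ 3) hy₁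
  have hyy := S.toReal_term_le_pmeH hγ hy₁ hy₁
  rw [sub_self, norm_zero, zero_pow two_ne_zero, zero_div, sub_zero] at hyy
  have hmin : (fb ζ y).toReal + ‖ζ - y‖ ^ 2 / (2 * γ) ≤ (fb y y).toReal + γ ^ 3 := by
    linarith
  have h2γ : (0 : ℝ) < 2 * γ := by positivity
  have hfar : ‖ζ - y‖ < ρ / 4 := by
    have hγ3 : γ ^ 3 < 1 := pow_lt_one₀ hγ.le (by linarith) three_ne_zero
    have h1 := (div_lt_iff₀ h2γ).mp (by linarith [S.toReal_le hy₁ hy₁] :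
      ‖ζ - y‖ ^ 2 / (2 * γ) < K - M + 1)
    nlinarith [norm_nonneg (ζ - y)]
  have hζ₂ : ζ ∈ ball xb (ρ / 2) := by
    rw [mem_ball, dist_eq_norm] at hy ⊢
    calc ‖ζ - xb‖ ≤ ‖ζ - y‖ + ‖y - xb‖ := norm_sub_le_norm_sub_add_norm_sub _ _ _
      _ < ρ / 2 := by linarith
  refine ⟨ζ, hζ₂, ?_, hmax⟩
  have hlip := (S.lipschitzOnWith_fst hy₁).dist_le_mul y hy₂ ζ hζ₂
  rw [Real.dist_eq, dist_eq_norm] at hlip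
  rw [norm_sub_rev] at hmin
  refine le_two_mul_add_one_mul_of_sq_le (NNReal.coe_nonneg _) hγ hγ1 ?_
  have := (div_le_iff₀ h2γ).mp (by linarith [le_abs_self ((fb y y).toReal - (fb ζ y).toReal)] :
    ‖y - ζ‖ ^ 2 / (2 * γ) ≤ lip ρ K M * ‖y - ζ‖ + γ ^ 3)
  linarith

/-- The slack `γ³` of the near-maximizer and the step `γ²` make every error term `O(γ)`. -/
lemma exists_approxSplit (S : IccBallBounds f fb xb ρ K M) {γ : ℝ} (hγ : 0 < γ)
    (hγ1 : γ ≤ 1 / 2) (hγρ : γ ≤ ρ / 4) (hγK : 32 * γ * (K - M + 1) ≤ ρ ^ 2) {x w d : En n}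
    (hx : x ∈ ball xb (ρ / 8)) (hw : w ∈ eSubdiff (pmeH fb γ) x) (hd : ‖d‖ ≤ 1) :
    ∃ ζ s, ApproxSplit fb xb (ρ / 2) (lip ρ K M) γ x (x - γ ^ 2 • d) w d ζ s := by
  have hρ := S.pos
  set y := x - γ ^ 2 • d
  have hγ2 : γ ^ 2 ≤ γ / 2 := by nlinarith
  have hy : y ∈ ball xb (ρ / 4) :=
    ball_subset_ball (by linarith) (sub_smul_mem_ball hx (sq_nonneg γ) hd)
  have hsub₂ : ball xb (ρ / 2) ⊆ ball xb ρ := ball_subset_ball (by linarith)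
  have hx₂ : x ∈ ball xb (ρ / 2) := ball_subset_ball (by linarith) hx
  have hy₂ : y ∈ ball xb (ρ / 2) := ball_subset_ball (by linarith) hy
  obtain ⟨ζ, hζ, hdist, hmax⟩ := S.exists_almost_max_near hγ hγ1 hγK hy
  have hneg : LipschitzOnWith (lip ρ K M) (fun q => -(fb ζ q).toReal)
      (ball xb (ρ / 2)) := fun a ha b hb => by
    simpa [edist_neg_neg] using S.lipschitzOnWith_snd (hsub₂ hζ) ha hb
  obtain ⟨s, hs, hsub⟩ := ConvexOn.exists_subgradient_of_lipschitzOnWith isOpen_ball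
    ((S.concaveOn_snd (hsub₂ hζ)).neg.subset hsub₂ (convex_ball _ _)) hneg hy₂
  refine ⟨ζ, s, hdist, hs, fun z hz => ?_, hsub, ?_⟩
  · have hmin : ∀ z' ∈ ball xb (ρ / 2), (fb ζ y).toReal + ‖ζ - y‖ ^ 2 / (2 * γ) ≤
        (fb z' y).toReal + ‖z' - y‖ ^ 2 / (2 * γ) + γ ^ 3 := fun z' hz' => by
      linarith [S.toReal_term_le_pmeH hγ (hsub₂ hz') (hsub₂ hy₂)]
    have := ((S.convexOn_fst (hsub₂ hy₂)).subset hsub₂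
      (convex_ball _ _)).add_inner_le_of_almost_prox (pow_pos hγ 2) (by linarith) hζ hz hmin
    have e₁ : γ ^ 2 * ‖z - ζ‖ ^ 2 / (2 * γ) = γ * (‖z - ζ‖ ^ 2 / 2) := by field_simp
    have e₂ : γ ^ 3 / γ ^ 2 = γ := by field_simp
    linarith
  · have hHx := S.coe_toReal_pmeH hγ (hsub₂ hx₂)
    have hHy := S.coe_toReal_pmeH hγ (hsub₂ hy₂)
    have hwy := hw.2 y
    rw [← hHx, ← hHy, ← EReal.coe_add, EReal.coe_le_coe_iff] at hwy
    have := inner_le_of_almost_max hγ (pow_pos hγ 2) hwy hmax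
      (S.toReal_term_le_pmeH hγ (hsub₂ hζ) (hsub₂ hx₂)) (hsub x hx₂)
    have e₁ : γ ^ 2 * ‖d‖ ^ 2 / γ ≤ γ := by
      have hd2 : ‖d‖ ^ 2 ≤ 1 := by nlinarith [norm_nonneg d]
      rw [div_le_iff₀ hγ]
      nlinarith [mul_le_mul_of_nonneg_left hd2 (sq_nonneg γ)]
    have e₂ : γ ^ 3 / γ ^ 2 = γ := by field_simp
    linarith

lemma exists_seq_approxSplit (S : IccBallBounds f fb xb ρ K M) {γ : ℕ → ℝ}
    (hγpos : ∀ k, 0 < γ k) (hγ : Tendsto γ atTop (𝓝 0)) {x w d : ℕ → En n}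
    (hx : Tendsto x atTop (𝓝 xb)) (hw : ∀ k, w k ∈ eSubdiff (pmeH fb (γ k)) (x k))
    (hd : ∀ k, ‖d k‖ ≤ 1) :
    ∃ ζ s : ℕ → En n, ∀ᶠ k in atTop, ApproxSplit fb xb (ρ / 2) (lip ρ K M) (γ k) (x k)
      (x k - γ k ^ 2 • d k) (w k) (d k) (ζ k) (s k) := by
  have hρ := S.pos
  have hγK : Tendsto (fun k => 32 * γ k * (K - M + 1)) atTop (𝓝 0) := by
    simpa using (hγ.const_mul 32).mul_const (K - M + 1)
  have hsmall : ∀ᶠ k in atTop, γ k ≤ 1 / 2 ∧ γ k ≤ ρ / 4 ∧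
      32 * γ k * (K - M + 1) ≤ ρ ^ 2 ∧ x k ∈ ball xb (ρ / 8) :=
    (hγ.eventually_le_const (by norm_num)).and <| (hγ.eventually_le_const (by positivity)).and <|
      (hγK.eventually_le_const (by positivity)).and
        (hx.eventually (ball_mem_nhds xb (by positivity)))
  have hsplit : ∀ k, ∃ ζ s, (γ k ≤ 1 / 2 ∧ γ k ≤ ρ / 4 ∧ 32 * γ k * (K - M + 1) ≤ ρ ^ 2 ∧
      x k ∈ ball xb (ρ / 8)) → ApproxSplit fb xb (ρ / 2) (lip ρ K M) (γ k) (x k)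
        (x k - γ k ^ 2 • d k) (w k) (d k) ζ s := fun k => by
    by_cases hk : γ k ≤ 1 / 2 ∧ γ k ≤ ρ / 4 ∧ 32 * γ k * (K - M + 1) ≤ ρ ^ 2 ∧
        x k ∈ ball xb (ρ / 8)
    · obtain ⟨ζ, s, h⟩ := S.exists_approxSplit (hγpos k) hk.1 hk.2.1 hk.2.2.1 hk.2.2.2 (hw k) (hd k)
      exact ⟨ζ, s, fun _ => h⟩
    · exact ⟨0, 0, fun h => absurd h hk⟩
  choose ζ s hζs using hsplit
  exact ⟨ζ, s, hsmall.mono fun k hk => hζs k hk⟩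

lemma mem_eSubdiff_fst_of_tendsto (S : IccBallBounds f fb xb ρ K M) {γ : ℕ → ℝ}
    (hγ : Tendsto γ atTop (𝓝 0)) {ζ y a : ℕ → En n} {a₀ : En n} (hζ : Tendsto ζ atTop (𝓝 xb))
    (hy : Tendsto y atTop (𝓝 xb)) (ha : Tendsto a atTop (𝓝 a₀))
    (h : ∀ᶠ k in atTop, ∀ z ∈ ball xb (ρ / 2), (fb (ζ k) (y k)).toReal + ⟪a k, z - ζ k⟫ -
      γ k * (‖z - ζ k‖ ^ 2 / 2 + 1) ≤ (fb z (y k)).toReal) :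
    a₀ ∈ eSubdiff (fun z => fb z xb) xb := by
  have hρ := S.pos
  have hxb : xb ∈ ball xb (ρ / 2) := mem_ball_self (by positivity)
  have hsub : ball xb (ρ / 2) ⊆ ball xb ρ := ball_subset_ball (by linarith)
  refine (S.icc.convex_fst xb (S.ball_subset (hsub hxb))).mem_eSubdiff_of_forall_mem_ball
    (S.coe_toReal (hsub hxb) (hsub hxb)).symm (half_pos hρ) fun z hz => ?_
  rw [← S.coe_toReal (hsub hz) (hsub hxb), EReal.coe_le_coe_iff]
  refine le_of_tendsto_of_tendsto ?_ (S.tendsto_toReal tendsto_const_nhds hy hz hxb)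
    (h.mono fun k hk => hk z hz)
  simpa using ((S.tendsto_toReal hζ hy hxb hxb).add (ha.inner (tendsto_const_nhds.sub hζ))).sub
    (hγ.mul (((((tendsto_const_nhds.sub hζ).norm).pow 2).div_const 2).add_const 1))

lemma mem_eSubdiff_snd_of_tendsto (S : IccBallBounds f fb xb ρ K M) {ζ y s : ℕ → En n}
    {s₀ : En n} (hζ : Tendsto ζ atTop (𝓝 xb)) (hy : Tendsto y atTop (𝓝 xb))
    (hs : Tendsto s atTop (𝓝 s₀))
    (h : ∀ᶠ k in atTop, ∀ q ∈ ball xb (ρ / 2),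
      -(fb (ζ k) (y k)).toReal + ⟪s k, q - y k⟫ ≤ -(fb (ζ k) q).toReal) :
    s₀ ∈ eSubdiff (fun x => -(fb xb x)) xb := by
  have hρ := S.pos
  have hxb : xb ∈ ball xb (ρ / 2) := mem_ball_self (by positivity)
  have hsub : ball xb (ρ / 2) ⊆ ball xb ρ := ball_subset_ball (by linarith)
  refine (S.icc.concave_snd xb (S.ball_subset (hsub hxb))).mem_eSubdiff_of_forall_mem_ball
    (c := -(fb xb xb).toReal) (by rw [EReal.coe_neg, S.coe_toReal (hsub hxb) (hsub hxb)])
    (half_pos hρ) fun q hq => ?_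
  rw [← S.coe_toReal (hsub hxb) (hsub hq), ← EReal.coe_neg, EReal.coe_le_coe_iff]
  exact le_of_tendsto_of_tendsto
    ((S.tendsto_toReal hζ hy hxb hxb).neg.add (hs.inner (tendsto_const_nhds.sub hy)))
    (S.tendsto_toReal hζ tendsto_const_nhds hxb hq).neg (h.mono fun k hk => hk q hq)

lemma eSubdiff_fst_subset_closedBall (S : IccBallBounds f fb xb ρ K M) :
    eSubdiff (fun z => fb z xb) xb ⊆ closedBall 0 (lip ρ K M) := by
  rintro a ⟨-, ha⟩
  have hρ := S.pos
  have hxb : xb ∈ ball xb (ρ / 2) := mem_ball_self (by positivity)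
  have hsub : ball xb (ρ / 2) ⊆ ball xb ρ := ball_subset_ball (by linarith)
  rw [mem_closedBall_zero_iff]
  refine norm_le_of_forall_inner_le (NNReal.coe_nonneg _) (half_pos hρ) fun v hv => ?_
  have hv' : xb + v ∈ ball xb (ρ / 2) := by simpa using hv
  have h : fb xb xb + ((⟪a, xb + v - xb⟫ : ℝ) : EReal) ≤ fb (xb + v) xb := ha (xb + v)
  rw [← S.coe_toReal (hsub hxb) (hsub hxb), ← S.coe_toReal (hsub hv') (hsub hxb),
    ← EReal.coe_add, EReal.coe_le_coe_iff, add_sub_cancel_left] at h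
  have hlip := (S.lipschitzOnWith_fst (hsub hxb)).dist_le_mul _ hv' _ hxb
  rw [Real.dist_eq, dist_eq_norm, add_sub_cancel_left] at hlip
  linarith [le_abs_self ((fb (xb + v) xb).toReal - (fb xb xb).toReal)]

lemma isClosed_eSubdiff_sub (S : IccBallBounds f fb xb ρ K M) :
    IsClosed (eSubdiff (fun z => fb z xb) xb - eSubdiff (fun x => -(fb xb x)) xb) := by
  rw [sub_eq_add_neg]
  exact (isClosed_eSubdiff _ _).neg.add_left_of_isCompact
    (isCompact_of_isClosed_isBounded (isClosed_eSubdiff _ _)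
      (isBounded_closedBall.subset S.eSubdiff_fst_subset_closedBall))

lemma exists_inner_le (S : IccBallBounds f fb xb ρ K M) {γ : ℕ → ℝ} (hγpos : ∀ k, 0 < γ k)
    (hγ : Tendsto γ atTop (𝓝 0)) {x v : ℕ → En n} {u : En n} (hx : Tendsto x atTop (𝓝 xb))
    (hv : ∀ k, v k ∈ eSubdiff (pmeG (γ k)) (x k) - eSubdiff (pmeH fb (γ k)) (x k))
    (hu : Tendsto v atTop (𝓝 u)) {d : En n} (hd : ‖d‖ ≤ 1) :
    ∃ a ∈ eSubdiff (fun z => fb z xb) xb, ∃ s ∈ eSubdiff (fun x => -(fb xb x)) xb,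
      ⟪u, d⟫ ≤ ⟪a - s, d⟫ := by
  choose p hp w hw hpw using hv
  obtain ⟨ζ, s, hsplit⟩ := S.exists_seq_approxSplit hγpos hγ hx hw fun _ => hd
  set L : ℝ := (lip ρ K M : ℝ)
  set a := fun k => (γ k)⁻¹ • (x k - γ k ^ 2 • d - ζ k)
  have hbdd : ∀ᶠ k in atTop, (a k, s k) ∈ closedBall (0 : En n) (2 * L + 1) ×ˢ closedBall 0 L :=
    hsplit.mono fun k hk => ⟨mem_closedBall_zero_iff.mpr (hk.norm_inv_smul_sub_le (hγpos k)),
      mem_closedBall_zero_iff.mpr hk.norm_le⟩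
  obtain ⟨⟨a₀, s₀⟩, -, φ, hφ, hlim⟩ := tendsto_subseq_of_frequently_bounded
    (isBounded_closedBall.prod isBounded_closedBall) hbdd.frequently
  have hφ' := hφ.tendsto_atTop
  have hγφ := hγ.comp hφ'
  have hsplitφ := hφ'.eventually hsplit
  obtain ⟨hyφ, hζφ⟩ := tendsto_of_eventually_approxSplit hγφ (hx.comp hφ') (fun _ => hd) hsplitφ
  have haφ : Tendsto (a ∘ φ) atTop (𝓝 a₀) := (continuous_fst.tendsto _).comp hlim
  have hsφ : Tendsto (s ∘ φ) atTop (𝓝 s₀) := (continuous_snd.tendsto _).comp hlim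
  refine ⟨a₀, S.mem_eSubdiff_fst_of_tendsto hγφ hζφ hyφ haφ
      (hsplitφ.mono fun j hj => hj.approx_subgrad_fst),
    s₀, S.mem_eSubdiff_snd_of_tendsto hζφ hyφ hsφ (hsplitφ.mono fun j hj => hj.subgrad_snd), ?_⟩
  refine le_of_tendsto_of_tendsto ((hu.comp hφ').inner tendsto_const_nhds)
    (by simpa using ((haφ.sub hsφ).inner tendsto_const_nhds).add (hγφ.const_mul 2))
    (hsplitφ.mono fun j hj => ?_)
  have hvj : v (φ j) = (γ (φ j))⁻¹ • x (φ j) - w (φ j) := by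
    rw [← hpw, eq_inv_smul_of_mem_eSubdiff_pmeG (hγpos _) (hp _)]
  simpa [hvj] using hj.inner_le

lemma eventually_norm_le (S : IccBallBounds f fb xb ρ K M) {γ : ℕ → ℝ} (hγpos : ∀ k, 0 < γ k)
    (hγ : Tendsto γ atTop (𝓝 0)) {x v : ℕ → En n} (hx : Tendsto x atTop (𝓝 xb))
    (hv : ∀ k, v k ∈ eSubdiff (pmeG (γ k)) (x k) - eSubdiff (pmeH fb (γ k)) (x k)) :
    ∀ᶠ k in atTop, ‖v k‖ ≤ 3 * lip ρ K M + 2 := by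
  choose p hp w hw hpw using hv
  set d := fun k => ‖v k‖⁻¹ • v k
  have hd : ∀ k, ‖d k‖ ≤ 1 := fun k => by
    rcases eq_or_ne (v k) 0 with h | h
    · simp [d, h]
    · simp [d, norm_smul, h]
  obtain ⟨ζ, s, hsplit⟩ := S.exists_seq_approxSplit hγpos hγ hx hw hd
  filter_upwards [hsplit, hγ.eventually_le_const one_half_pos] with k hk hγk
  have hvk : v k = (γ k)⁻¹ • x k - w k := by
    rw [← hpw, eq_inv_smul_of_mem_eSubdiff_pmeG (hγpos _) (hp _)]
  have hvd : ⟪v k, d k⟫ = ‖v k‖ := by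
    rcases eq_or_ne (v k) 0 with h | h
    · simp [d, h]
    · rw [real_inner_smul_right, real_inner_self_eq_norm_sq]
      field_simp [norm_ne_zero_iff.mpr h]
  have hsplit_le := hk.inner_le
  rw [← hvk, hvd] at hsplit_le
  have hinner := (real_inner_le_norm ((γ k)⁻¹ • (x k - γ k ^ 2 • d k - ζ k) - s k) (d k)).trans
    (mul_le_of_le_one_right (norm_nonneg _) (hd k))
  linarith [hinner.trans (norm_sub_le _ _), hk.norm_le, hk.norm_inv_smul_sub_le (hγpos k)]

lemma eApproxSubdiff_subset (S : IccBallBounds f fb xb ρ K M) {γ : ℕ → ℝ}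
    (hγpos : ∀ k, 0 < γ k) (hγ : Tendsto γ atTop (𝓝 0)) :
    eApproxSubdiff (fun k => pmeG (γ k)) (fun k => pmeH fb (γ k)) xb ⊆
      eSubdiff (fun z => fb z xb) xb - eSubdiff (fun x => -(fb xb x)) xb := by
  rintro u ⟨x, hx, N, hN, v, hv, hvu⟩
  refine mem_of_forall_exists_inner_le S.isClosed_eSubdiff_sub
    ((convex_eSubdiff _ _).sub (convex_eSubdiff _ _)) fun d hd => ?_
  obtain ⟨a, ha, s, hs, h⟩ := S.exists_inner_le (fun _ => hγpos _) (hγ.comp hN.tendsto_atTop)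
    (hx.comp hN.tendsto_atTop) hv hvu hd
  exact ⟨a - s, Set.sub_mem_sub ha hs, h⟩

lemma eApproxHorSubdiff_eq (S : IccBallBounds f fb xb ρ K M) {γ : ℕ → ℝ}
    (hγpos : ∀ k, 0 < γ k) (hγ : Tendsto γ atTop (𝓝 0)) :
    eApproxHorSubdiff (fun k => pmeG (γ k)) (fun k => pmeH fb (γ k)) xb = {0} := by
  refine Set.eq_singleton_iff_unique_mem.mpr
    ⟨⟨fun _ => xb, tendsto_const_nhds, Set.mem_insert _ _⟩, ?_⟩
  rintro u ⟨x, hx, rfl | ⟨N, hN, lam, hlam, -, hlam0, v, hv, hvu⟩⟩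
  · rfl
  have hbdd := S.eventually_norm_le (fun _ => hγpos _) (hγ.comp hN.tendsto_atTop)
    (hx.comp hN.tendsto_atTop) hv
  refine tendsto_nhds_unique hvu (squeeze_zero_norm' (hbdd.mono fun j hj => ?_)
    (by simpa using hlam0.mul_const (3 * (lip ρ K M : ℝ) + 2)))
  rw [norm_smul, Real.norm_of_nonneg (hlam j).le]
  exact mul_le_mul_of_nonneg_left hj (hlam j).le

end IccBallBounds

lemma exists_iccBallBounds (hicc : IsICC f fb)
    (hfb_bdd : ∃ M : ℝ, ∀ z ∈ edom f, ∀ x ∈ edom f, (M : EReal) ≤ fb z x)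
    (hfb_cont : ContinuousOn (fun p : En n × En n => fb p.1 p.2)
      (interior (edom f) ×ˢ interior (edom f)))
    (hxb : xb ∈ interior (edom f)) : ∃ ρ K M, IccBallBounds f fb xb ρ K M := by
  obtain ⟨M, hM⟩ := hfb_bdd
  have hxb' := interior_subset hxb
  have hc : ((fb xb xb).toReal : EReal) = fb xb xb :=
    EReal.coe_toReal (hicc.diag xb hxb' ▸ hxb'.ne)
      (ne_bot_of_le_ne_bot (EReal.coe_ne_bot M) (hM xb hxb' xb hxb'))
  have hlt : fb xb xb < (((fb xb xb).toReal + 1 : ℝ) : EReal) := by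
    conv_lhs => rw [← hc]
    exact EReal.coe_lt_coe_iff.mpr (lt_add_one _)
  have hU : interior (edom f) ×ˢ interior (edom f) ∈ 𝓝 (xb, xb) :=
    prod_mem_nhds (isOpen_interior.mem_nhds hxb) (isOpen_interior.mem_nhds hxb)
  obtain ⟨ρ, hρ, hball⟩ := Metric.eventually_nhds_iff_ball.mp
    (((hfb_cont.continuousAt hU).eventually (gt_mem_nhds hlt)).and hU)
  have hmem : ∀ z ∈ ball xb ρ, ∀ x ∈ ball xb ρ, ((z, x) : En n × En n) ∈ ball (xb, xb) ρ :=
    fun z hz x hx => by rw [← ball_prod_same]; exact ⟨hz, hx⟩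
  exact ⟨ρ, _, M, hρ, hicc, hM, fun z hz => interior_subset (hball _ (hmem z hz z hz)).2.1,
    fun z hz x hx => (hball _ (hmem z hz x hx)).1.le⟩

end

theorem stmt4_general {n : ℕ} (f : En n → EReal)
    (fb : En n → En n → EReal) (hicc : IsICC f fb)
    (hfb_bdd : ∃ M : ℝ, ∀ z ∈ edom f, ∀ x ∈ edom f, (M : EReal) ≤ fb z x)
    (hfb_cont : ContinuousOn (fun p : En n × En n => fb p.1 p.2)
      (interior (edom f) ×ˢ interior (edom f)))
    (γ : ℕ → ℝ) (hγpos : ∀ k, 0 < γ k)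
    (hγ0 : Tendsto γ atTop (nhds 0))
    (xb : En n) (hxb : xb ∈ interior (edom f)) :
    eApproxSubdiff (fun k => pmeG (γ k)) (fun k => pmeH fb (γ k)) xb ⊆
      eSubdiff (fun z => fb z xb) xb - eSubdiff (fun x => -(fb xb x)) xb ∧
    eApproxHorSubdiff (fun k => pmeG (γ k)) (fun k => pmeH fb (γ k)) xb = {0} := by
  obtain ⟨ρ, K, M, S⟩ := exists_iccBallBounds hicc hfb_bdd hfb_cont hxb
  exact ⟨S.eApproxSubdiff_subset hγpos hγ0, S.eApproxHorSubdiff_eq hγpos hγ0⟩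

/-- In the setting of Statement 3 (icc `f` with lifted function `f̄` and the
partial-Moreau-envelope approximating sequence with parameters `γ_k ↓ 0`), for every
`x̄ ∈ int (dom f)` the approximate subdifferential associated with `{g_{γ_k}, h_{γ_k}}`
satisfies `∂_A f(x̄) ⊆ ∂₁f̄(x̄,x̄) - ∂₂(-f̄)(x̄,x̄)` and `∂_A^∞ f(x̄) = {0}`. -/
theorem stmt4 {n : ℕ} (f : En n → EReal) (hproper : ProperE f)
    (hlsc : LowerSemicontinuous f)
    (fb : En n → En n → EReal) (hicc : IsICC f fb)
    (hdomclosed : IsClosed (edom f))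
    (hfb_lsc : LowerSemicontinuousOn (fun p : En n × En n => fb p.1 p.2)
      (Set.univ ×ˢ edom f))
    (hfb_bdd : ∃ M : ℝ, ∀ z ∈ edom f, ∀ x ∈ edom f, (M : EReal) ≤ fb z x)
    (hfb_cont : ContinuousOn (fun p : En n × En n => fb p.1 p.2)
      (interior (edom f) ×ˢ interior (edom f)))
    (γ : ℕ → ℝ) (hγpos : ∀ k, 0 < γ k) (hγanti : Antitone γ)
    (hγ0 : Tendsto γ atTop (nhds 0))
    (xb : En n) (hxb : xb ∈ interior (edom f)) :
    eApproxSubdiff (fun k => pmeG (γ k)) (fun k => pmeH fb (γ k)) xb ⊆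
      eSubdiff (fun z => fb z xb) xb - eSubdiff (fun x => -(fb xb x)) xb ∧
    eApproxHorSubdiff (fun k => pmeG (γ k)) (fun k => pmeH fb (γ k)) xb = {0} :=
  stmt4_general f fb hicc hfb_bdd hfb_cont γ hγpos hγ0 xb hxb
end
end

section
/- Let φ: ℝ → ℝ ∪ {+∞} be a proper, lsc, convex function. Then there exist a proper, lsc, convex, nondecreasing function φ↑: ℝ → ℝ ∪ {+∞} and a proper, lsc, convex, nonincreasing function φ↓: ℝ → ℝ ∪ {+∞} such that φ = φ↑ + φ↓. In addition, if int(dom φ) ≠ ∅, then ∂φ(z) = ∂φ↑(z) + ∂φ↓(z) for every z ∈ dom φ, where ∂ denotes the convex subdifferential and the sum is Minkowski addition of sets. -/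
open Filter Topology Set
open scoped Pointwise

noncomputable section

/-- Effective domain of an extended-real-valued function on ℝ. -/
def edom1 (φ : ℝ → EReal) : Set ℝ := {t | φ t < ⊤}

/-- Properness of an extended-real-valued function on ℝ. -/
def Proper1 (φ : ℝ → EReal) : Prop := (∃ t, φ t < ⊤) ∧ ∀ t, φ t ≠ ⊥

/-- Convexity of an extended-real-valued function on ℝ. -/
def EConvex1 (φ : ℝ → EReal) : Prop :=
  ∀ s t : ℝ, ∀ a b : ℝ, 0 ≤ a → 0 ≤ b → a + b = 1 →
    φ (a * s + b * t) ≤ (a : EReal) * φ s + (b : EReal) * φ t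

/-- The convex subdifferential of an extended-real-valued function on ℝ
(empty outside of the effective domain). -/
def eSubdiff1 (φ : ℝ → EReal) (t : ℝ) : Set ℝ :=
  {y | φ t ≠ ⊤ ∧ ∀ s : ℝ, φ t + ((y * (s - t) : ℝ) : EReal) ≤ φ s}

/-!
If `φ` is monotone or antitone, pair it with `0`. Otherwise convexity makes `φ` quasiconvex
(`φ v ≤ max (φ u) (φ w)` for `u ≤ v ≤ w`), so `φ` has no strict interior maximum and, being
neither monotone nor antitone, has a dent `φ b < φ a, φ c` with `a < b < c`. The minimum of the
lsc function `φ` on `[a, c]` is then global, attained at some `m`, and `φ` is antitone left of `m`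
and monotone right of it. Take `φ↑ t = φ (max t m)` and `φ↓ t = φ (min t m) - φ m`.

A sum of subgradients of `φ↑` and `φ↓` is always one of `φ↑ + φ↓ = φ`. Conversely, if `y ≤ 0` is
a subgradient of `φ` at `z`, then `z ≤ m` or `φ z = φ m`, which makes `y` a subgradient of `φ↓`
and `0` one of `φ↑` at `z`; symmetrically for `y ≥ 0`.
-/

namespace EConvex1

variable {φ : ℝ → EReal}

theorem le_max_of_mem_Icc (hφ : EConvex1 φ) {u v w : ℝ} (hv : v ∈ Icc u w) :
    φ v ≤ max (φ u) (φ w) := by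
  obtain ⟨a, b, ha, hb, hab, rfl⟩ := Icc_subset_segment (𝕜 := ℝ) hv
  have ha' : (0 : EReal) ≤ a := EReal.coe_nonneg.2 ha
  have hb' : (0 : EReal) ≤ b := EReal.coe_nonneg.2 hb
  calc φ (a • u + b • w) ≤ a * φ u + b * φ w := hφ u w a b ha hb hab
    _ ≤ a * max (φ u) (φ w) + b * max (φ u) (φ w) := by gcongr <;> simp
    _ = max (φ u) (φ w) := by
      rw [← EReal.right_distrib_of_nonneg ha' hb', ← EReal.coe_add, hab, EReal.coe_one, one_mul]

theorem monotoneOn_Ici {m : ℝ} (hφ : EConvex1 φ) (hm : ∀ t, φ m ≤ φ t) :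
    MonotoneOn φ (Ici m) :=
  fun _ hu v _ huv => (hφ.le_max_of_mem_Icc ⟨hu, huv⟩).trans (max_le (hm v) le_rfl)

theorem antitoneOn_Iic {m : ℝ} (hφ : EConvex1 φ) (hm : ∀ t, φ m ≤ φ t) :
    AntitoneOn φ (Iic m) :=
  fun u _ _ hv huv => (hφ.le_max_of_mem_Icc ⟨huv, hv⟩).trans (max_le le_rfl (hm u))

theorem exists_forall_le (hφ : EConvex1 φ) (hlsc : LowerSemicontinuous φ)
    (hmono : ¬Monotone φ) (hanti : ¬Antitone φ) : ∃ m, ∀ t, φ m ≤ φ t := by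
  obtain ⟨a, b, c, hab, hbc, ⟨hφab, hφcb⟩ | ⟨hφba, hφbc⟩⟩ :=
    not_monotone_not_antitone_iff_exists_lt_lt.1 ⟨hmono, hanti⟩
  · exact absurd (hφ.le_max_of_mem_Icc ⟨hab.le, hbc.le⟩) (max_lt hφab hφcb).not_ge
  have hac := (hab.trans hbc).le
  obtain ⟨m, -, hmin⟩ :=
    (hlsc.lowerSemicontinuousOn _).exists_isMinOn (nonempty_Icc.2 hac) isCompact_Icc
  refine ⟨m, fun t => ?_⟩
  rcases lt_or_ge t a with hta | hat
  · calc φ m ≤ φ a := hmin ⟨le_rfl, hac⟩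
      _ ≤ φ t := (le_max_iff.1 (hφ.le_max_of_mem_Icc ⟨hta.le, hab.le⟩)).resolve_right
          hφba.not_ge
  rcases le_or_gt t c with htc | hct
  · exact hmin ⟨hat, htc⟩
  · calc φ m ≤ φ c := hmin ⟨hac, le_rfl⟩
      _ ≤ φ t := (le_max_iff.1 (hφ.le_max_of_mem_Icc ⟨hbc.le, hct.le⟩)).resolve_left
          hφbc.not_ge

theorem comp_convexOn {f : ℝ → ℝ} {s : Set ℝ} (hφ : EConvex1 φ) (hmono : MonotoneOn φ s)
    (hs : Convex ℝ s) (hfs : ∀ t, f t ∈ s) (hf : ConvexOn ℝ univ f) :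
    EConvex1 (fun t => φ (f t)) := fun u v a b ha hb hab =>
  (hmono (hfs _) (hs (hfs u) (hfs v) ha hb hab) (hf.2 trivial trivial ha hb hab)).trans
    (hφ _ _ a b ha hb hab)

theorem comp_concaveOn {f : ℝ → ℝ} {s : Set ℝ} (hφ : EConvex1 φ) (hanti : AntitoneOn φ s)
    (hs : Convex ℝ s) (hfs : ∀ t, f t ∈ s) (hf : ConcaveOn ℝ univ f) :
    EConvex1 (fun t => φ (f t)) := fun u v a b ha hb hab =>
  (hanti (hs (hfs u) (hfs v) ha hb hab) (hfs _) (hf.2 trivial trivial ha hb hab)).trans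
    (hφ _ _ a b ha hb hab)

theorem monotone_comp_max {m : ℝ} (hφ : EConvex1 φ) (hm : ∀ t, φ m ≤ φ t) :
    Monotone fun t => φ (max t m) := fun u v huv =>
  hφ.monotoneOn_Ici hm (le_max_right u m) (le_max_right v m) (max_le_max_right m huv)

theorem antitone_comp_min {m : ℝ} (hφ : EConvex1 φ) (hm : ∀ t, φ m ≤ φ t) :
    Antitone fun t => φ (min t m) := fun u v huv =>
  hφ.antitoneOn_Iic hm (min_le_right u m) (min_le_right v m) (min_le_min_right m huv)

theorem comp_max {m : ℝ} (hφ : EConvex1 φ) (hm : ∀ t, φ m ≤ φ t) :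
    EConvex1 fun t => φ (max t m) :=
  hφ.comp_convexOn (hφ.monotoneOn_Ici hm) (convex_Ici m) (fun t => le_max_right t m)
    ((convexOn_id convex_univ).sup (convexOn_const m convex_univ))

theorem comp_min {m : ℝ} (hφ : EConvex1 φ) (hm : ∀ t, φ m ≤ φ t) :
    EConvex1 fun t => φ (min t m) :=
  hφ.comp_concaveOn (hφ.antitoneOn_Iic hm) (convex_Iic m) (fun t => min_le_right t m)
    ((concaveOn_id convex_univ).inf (concaveOn_const m convex_univ))

theorem sub_const (hφ : EConvex1 φ) (c : ℝ) : EConvex1 (fun t => φ t - c) := by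
  intro s t a b ha hb hab
  have ha' : (0 : EReal) ≤ a := EReal.coe_nonneg.2 ha
  have hb' : (0 : EReal) ≤ b := EReal.coe_nonneg.2 hb
  calc φ (a * s + b * t) - c ≤ a * φ s + b * φ t - c :=
        EReal.sub_le_sub (hφ s t a b ha hb hab) le_rfl
    _ = a * φ s + b * φ t - ((a * c + b * c : ℝ) : EReal) := by rw [← add_mul, hab, one_mul]
    _ = a * (φ s - c) + b * (φ t - c) := by
      rw [EReal.mul_sub_of_nonneg_of_ne_top ha' (EReal.coe_ne_top a),
        EReal.mul_sub_of_nonneg_of_ne_top hb' (EReal.coe_ne_top b), ← EReal.coe_mul,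
        ← EReal.coe_mul]
      simp only [sub_eq_add_neg, ← EReal.coe_neg, neg_add]
      rw [EReal.coe_add]
      ac_rfl

end EConvex1

theorem LowerSemicontinuous.sub_const {α : Type*} [TopologicalSpace α] {f : α → EReal}
    (hf : LowerSemicontinuous f) (c : ℝ) :
    LowerSemicontinuous (fun t => f t - c) :=
  hf.add' lowerSemicontinuous_const fun _ =>
    EReal.continuousAt_add (.inr (by simp)) (.inr (by simp))

theorem eq_comp_max_add_comp_min_sub {φ : ℝ → EReal} {m c : ℝ} (hc : φ m = c) (t : ℝ) :
    φ t = φ (max t m) + (φ (min t m) - c) := by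
  rcases le_total t m with h | h
  · rw [max_eq_right h, min_eq_left h, hc, add_comm, EReal.sub_add_cancel]
  · rw [max_eq_left h, min_eq_right h, hc, ← EReal.coe_sub, sub_self, EReal.coe_zero, add_zero]

section Subdifferential

variable {φ f g : ℝ → EReal} {z : ℝ}

theorem zero_mem_eSubdiff1 (hz : φ z ≠ ⊤) (hmin : ∀ s, φ z ≤ φ s) : 0 ∈ eSubdiff1 φ z :=
  ⟨hz, fun s => by simpa using hmin s⟩

theorem eSubdiff1_sub_const (c : ℝ) : eSubdiff1 (fun t => φ t - c) z = eSubdiff1 φ z := by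
  ext y
  simp only [eSubdiff1, mem_ofPred_eq, sub_eq_add_neg, ← EReal.coe_neg,
    add_right_comm _ ((-c : ℝ) : EReal), (EReal.addLECancellable_coe _).add_le_add_iff_right,
    EReal.add_ne_top_iff_ne_top_left (EReal.coe_ne_bot _) (EReal.coe_ne_top _)]

theorem eSubdiff1_add_subset :
    eSubdiff1 f z + eSubdiff1 g z ⊆ eSubdiff1 (fun t => f t + g t) z := by
  rintro _ ⟨a, ⟨hfz, ha⟩, b, ⟨hgz, hb⟩, rfl⟩
  refine ⟨EReal.add_ne_top hfz hgz, fun s => ?_⟩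
  calc f z + g z + (((a + b) * (s - z) : ℝ) : EReal)
      = (f z + (a * (s - z) : ℝ)) + (g z + (b * (s - z) : ℝ)) := by
        rw [add_mul, EReal.coe_add, add_add_add_comm]
    _ ≤ f s + g s := add_le_add (ha s) (hb s)

theorem eSubdiff1_eq_add_of_subset (hsum : ∀ t, φ t = f t + g t)
    (h : eSubdiff1 φ z ⊆ eSubdiff1 f z + eSubdiff1 g z) :
    eSubdiff1 φ z = eSubdiff1 f z + eSubdiff1 g z :=
  h.antisymm (funext hsum ▸ eSubdiff1_add_subset)

variable {m y : ℝ}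

theorem eq_of_mem_eSubdiff1 (hm : ∀ t, φ m ≤ φ t) (hy : y ∈ eSubdiff1 φ z)
    (h : 0 ≤ y * (m - z)) : φ z = φ m :=
  le_antisymm ((le_add_of_nonneg_right (EReal.coe_nonneg.2 h)).trans (hy.2 m)) (hm z)

theorem mem_eSubdiff1_comp_max (hm : ∀ t, φ m ≤ φ t) (hy : y ∈ eSubdiff1 φ z) (hy0 : 0 ≤ y) :
    y ∈ eSubdiff1 (fun t => φ (max t m)) z := by
  have hz : φ (max z m) = φ z := by
    rcases le_total m z with h | h
    · rw [max_eq_left h]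
    · rw [max_eq_right h, eq_of_mem_eSubdiff1 hm hy (mul_nonneg hy0 (sub_nonneg.2 h))]
  refine ⟨hz.trans_ne hy.1, fun s => ?_⟩
  calc φ (max z m) + ((y * (s - z) : ℝ) : EReal) ≤ φ z + ((y * (max s m - z) : ℝ) : EReal) := by
        rw [hz]; gcongr; exact le_max_left s m
    _ ≤ φ (max s m) := hy.2 _

theorem mem_eSubdiff1_comp_min (hm : ∀ t, φ m ≤ φ t) (hy : y ∈ eSubdiff1 φ z) (hy0 : y ≤ 0) :
    y ∈ eSubdiff1 (fun t => φ (min t m)) z := by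
  have hz : φ (min z m) = φ z := by
    rcases le_total z m with h | h
    · rw [min_eq_left h]
    · rw [min_eq_right h,
        eq_of_mem_eSubdiff1 hm hy (mul_nonneg_of_nonpos_of_nonpos hy0 (sub_nonpos.2 h))]
  refine ⟨hz.trans_ne hy.1, fun s => ?_⟩
  calc φ (min z m) + ((y * (s - z) : ℝ) : EReal) ≤ φ z + ((y * (min s m - z) : ℝ) : EReal) := by
        rw [hz]; gcongr φ z + ((?_ : ℝ) : EReal)
        exact mul_le_mul_of_nonpos_left (sub_le_sub_right (min_le_left s m) z) hy0
    _ ≤ φ (min s m) := hy.2 _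

theorem zero_mem_eSubdiff1_comp_max (hm : ∀ t, φ m ≤ φ t) (hy : y ∈ eSubdiff1 φ z)
    (hy0 : y ≤ 0) : 0 ∈ eSubdiff1 (fun t => φ (max t m)) z := by
  have hz : φ (max z m) = φ m := by
    rcases le_total m z with h | h
    · rw [max_eq_left h,
        eq_of_mem_eSubdiff1 hm hy (mul_nonneg_of_nonpos_of_nonpos hy0 (sub_nonpos.2 h))]
    · rw [max_eq_right h]
  exact zero_mem_eSubdiff1 (hz.trans_ne ((hm z).trans_lt hy.1.lt_top).ne)
    fun _ => hz.trans_le (hm _)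

theorem zero_mem_eSubdiff1_comp_min (hm : ∀ t, φ m ≤ φ t) (hy : y ∈ eSubdiff1 φ z)
    (hy0 : 0 ≤ y) : 0 ∈ eSubdiff1 (fun t => φ (min t m)) z := by
  have hz : φ (min z m) = φ m := by
    rcases le_total z m with h | h
    · rw [min_eq_left h, eq_of_mem_eSubdiff1 hm hy (mul_nonneg hy0 (sub_nonneg.2 h))]
    · rw [min_eq_right h]
  exact zero_mem_eSubdiff1 (hz.trans_ne ((hm z).trans_lt hy.1.lt_top).ne)
    fun _ => hz.trans_le (hm _)

theorem eSubdiff1_subset_comp_max_add_comp_min (hm : ∀ t, φ m ≤ φ t) (c : ℝ) :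
    eSubdiff1 φ z ⊆
      eSubdiff1 (fun t => φ (max t m)) z + eSubdiff1 (fun t => φ (min t m) - c) z := by
  intro y hy
  rw [eSubdiff1_sub_const]
  rcases le_total y 0 with hy0 | hy0
  · exact ⟨0, zero_mem_eSubdiff1_comp_max hm hy hy0, y, mem_eSubdiff1_comp_min hm hy hy0,
      zero_add y⟩
  · exact ⟨y, mem_eSubdiff1_comp_max hm hy hy0, 0, zero_mem_eSubdiff1_comp_min hm hy hy0,
      add_zero y⟩

end Subdifferential

/-- monotonic decomposition of univariate convex functions.
Every proper, lsc, convex `φ : ℝ → ℝ ∪ {+∞}` is the sum of a proper, lsc, convex,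
nondecreasing function `φ↑` and a proper, lsc, convex, nonincreasing function `φ↓`;
moreover, if `int (dom φ) ≠ ∅` then `∂φ(z) = ∂φ↑(z) + ∂φ↓(z)` for every `z ∈ dom φ`. -/
theorem stmt7 (φ : ℝ → EReal) (hproper : Proper1 φ)
    (hlsc : LowerSemicontinuous φ) (hconv : EConvex1 φ) :
    ∃ φu φd : ℝ → EReal,
      Proper1 φu ∧ LowerSemicontinuous φu ∧ EConvex1 φu ∧ Monotone φu ∧
      Proper1 φd ∧ LowerSemicontinuous φd ∧ EConvex1 φd ∧ Antitone φd ∧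
      (∀ t, φ t = φu t + φd t) ∧
      ((interior (edom1 φ)).Nonempty →
        ∀ z ∈ edom1 φ, eSubdiff1 φ z = eSubdiff1 φu z + eSubdiff1 φd z) := by
  have hproper0 : Proper1 (fun _ => 0) := ⟨⟨0, EReal.zero_lt_top⟩, fun _ => EReal.zero_ne_bot⟩
  have hconv0 : EConvex1 (fun _ => 0) := fun _ _ _ _ _ _ _ => by simp
  have hzero (z : ℝ) : 0 ∈ eSubdiff1 (fun _ => 0) z :=
    zero_mem_eSubdiff1 EReal.zero_ne_top fun _ => le_rfl
  by_cases hmono : Monotone φ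
  · exact ⟨φ, fun _ => 0, hproper, hlsc, hconv, hmono, hproper0, lowerSemicontinuous_const,
      hconv0, antitone_const, fun _ => (add_zero _).symm, fun _ z _ => eSubdiff1_eq_add_of_subset
        (fun _ => (add_zero _).symm) fun y hy => ⟨y, hy, 0, hzero z, add_zero y⟩⟩
  by_cases hanti : Antitone φ
  · exact ⟨fun _ => 0, φ, hproper0, lowerSemicontinuous_const, hconv0, monotone_const, hproper,
      hlsc, hconv, hanti, fun _ => (zero_add _).symm, fun _ z _ => eSubdiff1_eq_add_of_subset
        (fun _ => (zero_add _).symm) fun y hy => ⟨0, hzero z, y, hy, zero_add y⟩⟩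
  obtain ⟨m, hm⟩ := hconv.exists_forall_le hlsc hmono hanti
  obtain ⟨c, hc⟩ : ∃ c : ℝ, φ m = c := by
    obtain ⟨t, ht⟩ := hproper.1
    exact ⟨(φ m).toReal, (EReal.coe_toReal ((hm t).trans_lt ht).ne (hproper.2 m)).symm⟩
  have hsum := eq_comp_max_add_comp_min_sub hc
  exact ⟨fun t => φ (max t m), fun t => φ (min t m) - c,
    ⟨⟨m, by simp [hc]⟩, fun _ => hproper.2 _⟩, hlsc.comp (continuous_id.max continuous_const),
    hconv.comp_max hm, hconv.monotone_comp_max hm,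
    ⟨⟨m, by simp [hc]⟩, fun _ => EReal.add_ne_bot_iff.2 ⟨hproper.2 _, by simp⟩⟩,
    (hlsc.comp (continuous_id.min continuous_const)).sub_const c, (hconv.comp_min hm).sub_const c,
    fun _ _ huv => EReal.sub_le_sub (hconv.antitone_comp_min hm huv) le_rfl,
    hsum, fun _ _ _ =>
      eSubdiff1_eq_add_of_subset hsum (eSubdiff1_subset_comp_max_add_comp_min hm c)⟩
end
end

section
/- Consider problem (CP₁) solved by the prox-ADC method, and suppose Assumptions 1–4 hold. Then: (a) the strongly convex subproblem defining x^{k,i+1} is feasible for every k, i ∈ ℕ; and (b) the stopping rule of the inner loop is achieved in finitely many steps, i.e., for every k the smallest integer i_k satisfying the inner termination conditions is finite. -/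
open Filter Topology Metric Set
open scoped Pointwise RealInnerProductSpace Classical

noncomputable section

/-- Regular (Fréchet) subdifferential of an extended-real-valued function. -/
def regSubdiff {n : ℕ} (f : En n → EReal) (xb : En n) : Set (En n) :=
  {v | ∃ r : ℝ, f xb = (r : EReal) ∧ ∀ ε : ℝ, 0 < ε → ∃ δ : ℝ, 0 < δ ∧
      ∀ x : En n, ‖x - xb‖ ≤ δ →
        ((r + ⟪v, x - xb⟫ - ε * ‖x - xb‖ : ℝ) : EReal) ≤ f x}

/-- Limiting (Mordukhovich) subdifferential. -/
def limSubdiff {n : ℕ} (f : En n → EReal) (xb : En n) : Set (En n) :=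
  {v | ∃ (xk vk : ℕ → En n), (∀ k, vk k ∈ regSubdiff f (xk k)) ∧
      Tendsto xk atTop (nhds xb) ∧
      Tendsto (fun k => f (xk k)) atTop (nhds (f xb)) ∧
      Tendsto vk atTop (nhds v)}

/-- Horizon subdifferential. -/
def horSubdiff {n : ℕ} (f : En n → EReal) (xb : En n) : Set (En n) :=
  insert 0 {v | ∃ (xk vk : ℕ → En n) (lam : ℕ → ℝ),
      (∀ k, vk k ∈ regSubdiff f (xk k)) ∧
      Tendsto xk atTop (nhds xb) ∧ Tendsto (fun k => f (xk k)) atTop (nhds (f xb)) ∧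
      (∀ k, 0 < lam k) ∧ Antitone lam ∧ Tendsto lam atTop (nhds 0) ∧
      Tendsto (fun k => lam k • vk k) atTop (nhds v)}

/-- Convex subdifferential of a real-valued function on ℝⁿ. -/
def convSubdiff {n : ℕ} (f : En n → ℝ) (x : En n) : Set (En n) :=
  {v | ∀ y, f x + ⟪v, y - x⟫ ≤ f y}

/-- The approximate subdifferential of an ADC function, associated with real-valued
convex DC decomposition sequences `g`, `h`. -/
def approxSubdiff {n : ℕ} (g h : ℕ → En n → ℝ) (xb : En n) : Set (En n) :=
  {v | ∃ xk : ℕ → En n, Tendsto xk atTop (nhds xb) ∧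
        v ∈ OuterLim (fun k => convSubdiff (g k) (xk k) - convSubdiff (h k) (xk k))}

/-- The approximate horizon subdifferential, real-valued decompositions. -/
def approxHorSubdiff {n : ℕ} (g h : ℕ → En n → ℝ) (xb : En n) : Set (En n) :=
  {v | ∃ xk : ℕ → En n, Tendsto xk atTop (nhds xb) ∧
        v ∈ HorizonLim (fun k => convSubdiff (g k) (xk k) - convSubdiff (h k) (xk k))}

/-- Clarke subdifferential of a (locally Lipschitz) real-valued function:
the convex hull of the limiting subdifferential. -/
def clarkeSubdiff {n : ℕ} (f : En n → ℝ) (xb : En n) : Set (En n) :=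
  convexHull ℝ (limSubdiff (fun x => ((f x : ℝ) : EReal)) xb)

/-- Convex normal cone of a set `C ⊆ ℝ` at `t` (empty if `t ∉ C`). -/
def nc1 (C : Set ℝ) (t : ℝ) : Set ℝ := {v | t ∈ C ∧ ∀ s ∈ C, v * (s - t) ≤ 0}

/-- `φu`, `φd` form a monotonic decomposition of a univariate convex function `φ`. -/
def IsMonoDecomp (φ φu φd : ℝ → EReal) : Prop :=
  Proper1 φu ∧ LowerSemicontinuous φu ∧ EConvex1 φu ∧ Monotone φu ∧
  Proper1 φd ∧ LowerSemicontinuous φd ∧ EConvex1 φd ∧ Antitone φd ∧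
  (∀ t, φ t = φu t + φd t) ∧ (Monotone φ → ∀ t, φd t = 0)

/-- The set `T_p(x̄)` of limits of values `f_p^k(x^k)` along subsequences, over sequences
`x^k → x̄`. -/
def Tset {n : ℕ} (fk : ℕ → En n → ℝ) (xb : En n) : Set ℝ :=
  {t | ∃ xk : ℕ → En n, Tendsto xk atTop (nhds xb) ∧
      ∃ N : ℕ → ℕ, StrictMono N ∧ Tendsto (fun j => fk (N j) (xk (N j))) atTop (nhds t)}

/-- **Assumption 1** for the composite problem: for each `p`, `f_p` is e-ADC associated with
`{f_p^k = g_p^k - h_p^k}` with `g_p^k, h_p^k` real-valued convex on ℝⁿ; the values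
`f_p^k(x')` are locally eventually bounded; and `φ_p ∘ f_p^k` epi-converges to `φ_p ∘ f_p`. -/
def Assump1 {n m : ℕ} (φ : Fin m → ℝ → EReal) (f : Fin m → En n → ℝ)
    (g h : Fin m → ℕ → En n → ℝ) : Prop :=
  ∀ p : Fin m,
    (∀ k, ConvexOn ℝ Set.univ (g p k) ∧ ConvexOn ℝ Set.univ (h p k)) ∧
    EpiConv (fun k x => ((g p k x - h p k x : ℝ) : EReal))
      (fun x => ((f p x : ℝ) : EReal)) ∧
    (∀ x : En n,
      (⊥ : EReal) < Filter.liminf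
          (fun q : En n × ℕ => ((g p q.2 q.1 - h p q.2 q.1 : ℝ) : EReal))
          ((nhds x) ×ˢ atTop) ∧
      Filter.limsup
          (fun q : En n × ℕ => ((g p q.2 q.1 - h p q.2 q.1 : ℝ) : EReal))
          ((nhds x) ×ˢ atTop) < (⊤ : EReal)) ∧
    EpiConv (fun k x => φ p (g p k x - h p k x)) (fun x => φ p (f p x))

/-- `x̄` is an A-stationary point of the composite problem `min Σ_p φ_p(f_p(x))`,
relative to the ADC decompositions `{g_p^k, h_p^k}`. -/
def AStationary {n m : ℕ} (φ : Fin m → ℝ → EReal) (g h : Fin m → ℕ → En n → ℝ)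
    (xb : En n) : Prop :=
  ∃ (y : Fin m → ℝ) (v : Fin m → En n),
    (∀ p : Fin m,
      (∃ t ∈ Tset (fun k x => g p k x - h p k x) xb, y p ∈ eSubdiff1 (φ p) t) ∧
      (v p ∈ y p • approxSubdiff (g p) (h p) xb ∨
        v p ∈ (approxHorSubdiff (g p) (h p) xb ∪ -approxHorSubdiff (g p) (h p) xb) \ {0})) ∧
    ∑ p, v p = 0

/-- `x̄` is a weakly A-stationary point of the composite problem `min Σ_p φ_p(f_p(x))`,
relative to the ADC decompositions `{g_p^k, h_p^k}` and the monotonic decompositions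
`φ_p = φu_p + φd_p`. -/
def WeaklyAStationary {n m : ℕ} (φu φd : Fin m → ℝ → EReal) (g h : Fin m → ℕ → En n → ℝ)
    (xb : En n) : Prop :=
  ∃ (t : Fin m → ℝ) (y1 y2 : Fin m → ℝ) (v : Fin m → En n),
    (∀ p : Fin m,
      t p ∈ Tset (fun k x => g p k x - h p k x) xb ∧
      y1 p ∈ eSubdiff1 (φu p) (t p) ∧ y2 p ∈ eSubdiff1 (φd p) (t p) ∧
      (v p ∈ (y1 p • approxSubdiff (g p) (h p) xb + y2 p • approxSubdiff (g p) (h p) xb) ∨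
        v p ∈ (approxHorSubdiff (g p) (h p) xb ∪ -approxHorSubdiff (g p) (h p) xb) \ {0})) ∧
    ∑ p, v p = 0

/-- The Euclidean-type norm of a multiplier vector `(y_{p,1}, y_{p,2})_{p=1}^m`. -/
def ynorm {m : ℕ} (y : Fin m → ℝ × ℝ) : ℝ :=
  Real.sqrt (∑ p, ((y p).1 ^ 2 + (y p).2 ^ 2))

/-- All the data of problem (CP₁) and of the prox-ADC method: the outer convex functions
`φ_p` with monotonic decompositions `φ_p = φu_p + φd_p`, the inner functions `f_p` with
ADC decompositions `f_p^k = g_p^k - h_p^k`, the constants `α̂_p^k`, `ℓ_k`, `λ`, `ε_k`,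
`δ_k`, the initial point `x⁰`, the inner iterates `X k i = x^{k,i}`, the subgradient
selections `aSel p k i ∈ ∂h_p^k(x^{k,i})`, `bSel p k i ∈ ∂g_p^k(x^{k,i})`, and the inner
stopping indices `iK k = i_k`. -/
structure CP1 (n m m₁ : ℕ) where
  φ : Fin m → ℝ → EReal
  φu : Fin m → ℝ → EReal
  φd : Fin m → ℝ → EReal
  f : Fin m → En n → ℝ
  g : Fin m → ℕ → En n → ℝ
  h : Fin m → ℕ → En n → ℝ
  αh : Fin m → ℕ → ℝ
  ell : ℕ → ℝ
  lam : ℝ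
  eps : ℕ → ℝ
  del : ℕ → ℝ
  x0 : En n
  X : ℕ → ℕ → En n
  aSel : Fin m → ℕ → ℕ → En n
  bSel : Fin m → ℕ → ℕ → En n
  iK : ℕ → ℕ

namespace CP1

variable {n m m₁ : ℕ} (D : CP1 n m m₁)

/-- The approximating functions `f_p^k = g_p^k - h_p^k`. -/
def fk (p : Fin m) (k : ℕ) (x : En n) : ℝ := D.g p k x - D.h p k x

/-- Structure of the outer functions in (CP₁): `φ_p` is real-valued convex for `p ≤ m₁`
and equals the indicator `δ_{(-∞,0]}` for `p > m₁`. -/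
def PhiOK : Prop :=
  (∀ p : Fin m, (p : ℕ) < m₁ →
    (∀ t, D.φ p t ≠ ⊤ ∧ D.φ p t ≠ ⊥) ∧ EConvex1 (D.φ p)) ∧
  (∀ p : Fin m, m₁ ≤ (p : ℕ) →
    D.φ p = fun t => if t ≤ 0 then (0 : EReal) else ⊤)

/-- The monotonic decompositions `φ_p = φu_p + φd_p` are valid. -/
def DecompOK : Prop := ∀ p, IsMonoDecomp (D.φ p) (D.φu p) (D.φd p)

/-- Assumption 1 for the data of (CP₁). -/
def A1 : Prop := Assump1 D.φ D.f D.g D.h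

/-- The feasible set `X^k` of the `k`-th approximating constraints. -/
def Xfeas (k : ℕ) : Set (En n) := {x | ∀ p : Fin m, m₁ ≤ (p : ℕ) → D.fk p k x ≤ 0}

/-- The tail sums `Σ_{k' ≥ k} α̂_p^{k'}`. -/
def tail (p : Fin m) (k : ℕ) : ℝ := ∑' j : ℕ, D.αh p (k + j)

/-- **Assumption 2** (strict feasibility). -/
def A2 : Prop :=
  (∀ p k, 0 ≤ D.αh p k) ∧ (∀ p, Summable (D.αh p)) ∧
  (∀ p : Fin m, (p : ℕ) < m₁ → ∀ k, D.αh p k = 0) ∧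
  (∀ p : Fin m, m₁ ≤ (p : ℕ) → ∀ k, ∀ x ∈ D.Xfeas k,
    D.fk p (k + 1) x - D.fk p k x ≤ D.αh p k) ∧
  (∀ p : Fin m, m₁ ≤ (p : ℕ) → D.fk p 0 D.x0 ≤ -(∑' j : ℕ, D.αh p j))

/-- **Assumption 3** (Hausdorff-Lipschitz continuity of `∂g_p^k` or `∂h_p^k`). -/
def A3 : Prop := ∀ k : ℕ, 0 < D.ell k ∧ ∀ (p : Fin m) (x x' : En n),
  min (Metric.hausdorffDist (convSubdiff (D.g p k) x) (convSubdiff (D.g p k) x'))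
      (Metric.hausdorffDist (convSubdiff (D.h p k) x) (convSubdiff (D.h p k) x'))
    ≤ D.ell k * ‖x - x'‖

/-- **Assumption 4** (level-boundedness of `H^k = Σ_p φ_p ∘ f_p^k`). -/
def A4 : Prop := ∀ (k : ℕ) (r : ℝ),
  Bornology.IsBounded {x : En n | (∑ p, D.φ p (D.fk p k x)) ≤ (r : EReal)}

/-- **Assumption 5** (asymptotic constraint qualification). -/
def A5 : Prop := ∀ xb : En n, (∀ p, D.φ p (D.f p xb) ≠ ⊤) →
  ∀ (y : Fin m → ℝ) (v : Fin m → En n),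
    (∀ p : Fin m,
      ((∃ t ∈ Tset (D.fk p) xb, y p ∈ nc1 (edom1 (D.φ p)) t) ∧
        v p ∈ convexHull ℝ (approxSubdiff (D.g p) (D.h p) xb)) ∨
      v p ∈ approxHorSubdiff (D.g p) (D.h p) xb \ {0}) →
    ∑ p, y p • v p = 0 → ∀ p, y p = 0

/-- The algorithmic parameters `λ, ε_k, δ_k` are admissible. -/
def ParamsOK : Prop :=
  0 < D.lam ∧ (∀ k, 0 < D.eps k ∧ 0 < D.del k) ∧
  Antitone D.eps ∧ Antitone D.del ∧
  Tendsto D.eps atTop (nhds 0) ∧ Tendsto D.del atTop (nhds 0) ∧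
  Antitone (fun k => D.del k / (D.lam + D.ell k)) ∧
  Tendsto (fun k => D.del k / (D.lam + D.ell k)) atTop (nhds 0)

/-- The upper surrogate `f_p^{k,upper}(x; x^{k,i})`. -/
def Fupper (p : Fin m) (k i : ℕ) (x : En n) : ℝ :=
  D.g p k x - D.h p k (D.X k i) - ⟪D.aSel p k i, x - D.X k i⟫ + D.tail p k

/-- The lower surrogate `f_p^{k,lower}(x; x^{k,i})`. -/
def Flower (p : Fin m) (k i : ℕ) (x : En n) : ℝ :=
  D.g p k (D.X k i) + ⟪D.bSel p k i, x - D.X k i⟫ - D.h p k x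

/-- The feasible set of the convex subproblem at inner iteration `(k,i)`. -/
def Cons (k i : ℕ) : Set (En n) :=
  {x | ∀ p : Fin m, m₁ ≤ (p : ℕ) → D.Fupper p k i x ≤ 0}

/-- The objective of the strongly convex subproblem at inner iteration `(k,i)`. -/
def Obj (k i : ℕ) (x : En n) : EReal :=
  (∑ p : Fin m, if (p : ℕ) < m₁ then
      D.φu p (D.Fupper p k i x) + D.φd p (D.Flower p k i x) else 0)
  + ((D.lam / 2 * ‖x - D.X k i‖ ^ 2 : ℝ) : EReal)

/-- The inner-loop stopping conditions at inner iteration `(k,i)`. -/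
def Stop (k i : ℕ) : Prop :=
  (∀ p : Fin m,
    D.Fupper p k i (D.X k (i + 1)) ≤ D.fk p k (D.X k (i + 1)) + D.tail p k + D.eps k) ∧
  (∀ p : Fin m, ¬ Monotone (D.φ p) →
    D.fk p k (D.X k (i + 1)) - D.eps k ≤ D.Flower p k i (D.X k (i + 1))) ∧
  ‖D.X k (i + 1) - D.X k i‖ ≤ D.del k / (D.lam + D.ell k)

/-- The iterates follow the prox-ADC method: the initial point is `x⁰`, the subgradient
selections are valid, `x^{k,i+1}` solves the convex subproblem (whenever feasible), and
each new outer iterate is `x^{k+1} = x^{k, i_k}`. -/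
def IterOK : Prop :=
  D.X 0 0 = D.x0 ∧
  (∀ (p : Fin m) (k i : ℕ),
    D.aSel p k i ∈ convSubdiff (D.h p k) (D.X k i) ∧
    D.bSel p k i ∈ convSubdiff (D.g p k) (D.X k i)) ∧
  (∀ k i : ℕ, (D.Cons k i).Nonempty →
    D.X k (i + 1) ∈ D.Cons k i ∧
      ∀ x ∈ D.Cons k i, D.Obj k i (D.X k (i + 1)) ≤ D.Obj k i x) ∧
  (∀ k : ℕ, D.X (k + 1) 0 = D.X k (D.iK k))

/-- The inner loop of the prox-ADC method terminates at `i_k`, the first index satisfying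
the stopping conditions. -/
def StopOK : Prop := ∀ k : ℕ, D.Stop k (D.iK k) ∧ ∀ i < D.iK k, ¬ D.Stop k i

/-- `∂f_p^{k,upper}(·; x^{k,i})`, the convex subdifferential of the upper surrogate. -/
def dFupper (p : Fin m) (k i : ℕ) (x : En n) : Set (En n) :=
  convSubdiff (D.g p k) x - {D.aSel p k i}

/-- `∂f_p^{k,lower}(·; x^{k,i})`, the (super)differential of the lower surrogate. -/
def dFlower (p : Fin m) (k i : ℕ) (x : En n) : Set (En n) :=
  {D.bSel p k i} - convSubdiff (D.h p k) x

/-- The set `Y^k(x^{k+1})` of KKT multipliers of the subproblem at `(x^{k,i_k}, x^{k,i_k+1})`. -/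
def Yset (k : ℕ) : Set (Fin m → ℝ × ℝ) :=
  {y | (∀ p : Fin m,
      (y p).1 ∈ eSubdiff1 (D.φu p) (D.Fupper p k (D.iK k) (D.X k (D.iK k + 1))) ∧
      (y p).2 ∈ eSubdiff1 (D.φd p) (D.Flower p k (D.iK k) (D.X k (D.iK k + 1)))) ∧
    ∃ v w : Fin m → En n,
      (∀ p : Fin m,
        v p ∈ D.dFupper p k (D.iK k) (D.X k (D.iK k + 1)) ∧
        w p ∈ D.dFlower p k (D.iK k) (D.X k (D.iK k + 1))) ∧
      (0 : En n) = ∑ p, ((y p).1 • v p + (y p).2 • w p)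
        + D.lam • (D.X k (D.iK k + 1) - D.X k (D.iK k))}

/-- The generic upper surrogate `f_p^{k,upper}(x; x')` built from a subgradient
`a ∈ ∂h_p^k(x')`. -/
def FupGen (p : Fin m) (k : ℕ) (x' a x : En n) : ℝ :=
  D.g p k x - D.h p k x' - ⟪a, x - x'⟫ + D.tail p k

/-- The generic lower surrogate `f_p^{k,lower}(x; x')` built from a subgradient
`b ∈ ∂g_p^k(x')`. -/
def FloGen (p : Fin m) (k : ℕ) (x' b x : En n) : ℝ :=
  D.g p k x' + ⟪b, x - x'⟫ - D.h p k x

/-- The generic feasible set of the subproblem at `x'`. -/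
def ConsGen (k : ℕ) (x' : En n) (a : Fin m → En n) : Set (En n) :=
  {x | ∀ p : Fin m, m₁ ≤ (p : ℕ) → D.FupGen p k x' (a p) x ≤ 0}

/-- The generic objective of the subproblem at `x'`. -/
def ObjGen (k : ℕ) (x' : En n) (a b : Fin m → En n) (x : En n) : EReal :=
  (∑ p : Fin m, if (p : ℕ) < m₁ then
      D.φu p (D.FupGen p k x' (a p) x) + D.φd p (D.FloGen p k x' (b p) x) else 0)
  + ((D.lam / 2 * ‖x - x'‖ ^ 2 : ℝ) : EReal)

/-- **Assumption 6** (non-asymptotic constraint qualification). -/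
def A6 : Prop := ∀ (k : ℕ) (x' x'' : En n) (a b : Fin m → En n),
  (∀ p, a p ∈ convSubdiff (D.h p k) x' ∧ b p ∈ convSubdiff (D.g p k) x') →
  x'' ∈ D.ConsGen k x' a →
  (∀ x ∈ D.ConsGen k x' a, D.ObjGen k x' a b x'' ≤ D.ObjGen k x' a b x) →
  ∀ (y : Fin m → ℝ) (v : Fin m → En n),
    (∀ p : Fin m, (p : ℕ) < m₁ → y p = 0) →
    (∀ p : Fin m, m₁ ≤ (p : ℕ) →
      y p ∈ nc1 (Set.Iic (0 : ℝ)) (D.FupGen p k x' (a p) x'') ∧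
      v p ∈ (convSubdiff (D.g p k) x'' - {a p})) →
    ∑ p, y p • v p = 0 →
    ∀ p : Fin m, y p = 0

/-- The equi-boundedness constant `D = sup_k sup {‖y‖ : y ∈ Y^k(x^{k+1})}`. -/
def Dsup : ℝ :=
  sSup {r : ℝ | ∃ (k : ℕ) (y : Fin m → ℝ × ℝ), y ∈ D.Yset k ∧ r = ynorm y}

end CP1

/-!
Feasibility is propagated along the iterates: if `x^{k,i}` satisfies the tightened constraints
`f_p^k + Σ_{k' ≥ k} α̂_p^{k'} ≤ 0`, it is feasible for the subproblem at `(k, i)`, so the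
subproblem's solution `x^{k,i+1}` lies in its feasible set, and since `f_p^{k,upper}` majorizes
`f_p^k + Σ_{k' ≥ k} α̂_p^{k'}` it again satisfies the tightened constraints; Assumption 2 carries
them from `k` to `k + 1`.

For the stopping rule, fix `k`. Comparing the subproblem's value at its minimizer `x^{k,i+1}`
with its value at `x^{k,i}` gives the sufficient decrease
`Σ_{p ≤ m₁} φ_p(f_p^k(x^{k,i+1})) + λ/2 ‖x^{k,i+1} - x^{k,i}‖² ≤ Σ_{p ≤ m₁} φ_p(f_p^k(x^{k,i}))`.
By level-boundedness the inner iterates stay in a compact set, on which the objective is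
bounded below, so `‖x^{k,i+1} - x^{k,i}‖ → 0`. The convex functions `g_p^k, h_p^k` are
Lipschitz on that compact set, so their linearization errors at `x^{k,i}` are
`O(‖x^{k,i+1} - x^{k,i}‖)` and all stopping conditions eventually hold.
-/

lemma tendsto_zero_of_sufficient_decrease {u d : ℕ → ℝ} {c : ℝ} (hc : 0 < c)
    (hd : ∀ i, 0 ≤ d i) (hu : ∀ i, u (i + 1) + c * d i ^ 2 ≤ u i) (hb : BddBelow (range u)) :
    Tendsto d atTop (𝓝 0) := by
  have hanti : Antitone u := antitone_nat_of_succ_le fun i => by nlinarith [hu i, sq_nonneg (d i)]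
  have hlim := tendsto_atTop_ciInf hanti hb
  have hgap : Tendsto (fun i => (u i - u (i + 1)) / c) atTop (𝓝 0) := by
    simpa using (hlim.sub (hlim.comp (tendsto_add_atTop_nat 1))).div_const c
  have hsq : Tendsto (fun i => d i ^ 2) atTop (𝓝 0) :=
    squeeze_zero (fun i => sq_nonneg (d i))
      (fun i => by rw [le_div_iff₀ hc]; linarith [hu i]) hgap
  simpa [Real.sqrt_sq (hd _)] using hsq.sqrt

section ConvexSubgradient

variable {n : ℕ} {f : En n → ℝ} {K : NNReal} {s : Set (En n)} {x y v : En n}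

lemma norm_le_of_mem_convSubdiff (hf : LipschitzOnWith K f s) (hx : closedBall x 1 ⊆ s)
    (hv : v ∈ convSubdiff f x) : ‖v‖ ≤ K := by
  rcases eq_or_ne v 0 with rfl | hv0
  · simp
  have hvpos : 0 < ‖v‖ := norm_pos_iff.2 hv0
  set u : En n := ‖v‖⁻¹ • v
  have hu : ‖u‖ = 1 := by simp [u, norm_smul, hvpos.ne']
  have hvu : ⟪v, u⟫ = ‖v‖ := by
    simp only [u, real_inner_smul_right, real_inner_self_eq_norm_mul_norm]
    field_simp
  have hxu : x + u ∈ s := hx (by simp [hu])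
  have hsub := hv (x + u)
  have hlip := (hf.dist_le_mul (x + u) hxu x (hx (mem_closedBall_self zero_le_one)))
  rw [add_sub_cancel_left, hvu] at hsub
  rw [Real.dist_eq, dist_eq_norm, add_sub_cancel_left, hu, mul_one] at hlip
  linarith [le_abs_self (f (x + u) - f x)]

lemma convSubdiff_gap_le (hf : LipschitzOnWith K f s) (hx : closedBall x 1 ⊆ s) (hy : y ∈ s)
    (hv : v ∈ convSubdiff f x) : f y - f x - ⟪v, y - x⟫ ≤ 2 * K * ‖y - x‖ := by
  have hlip := hf.dist_le_mul y hy x (hx (mem_closedBall_self zero_le_one))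
  rw [Real.dist_eq, dist_eq_norm] at hlip
  have hinner : -⟪v, y - x⟫ ≤ K * ‖y - x‖ :=
    (neg_le_abs _).trans <| (abs_real_inner_le_norm v (y - x)).trans <|
      mul_le_mul_of_nonneg_right (norm_le_of_mem_convSubdiff hf hx hv) (norm_nonneg _)
  linarith [le_abs_self (f y - f x)]

lemma tendsto_convSubdiff_gap (hf : ConvexOn ℝ univ f) {x v : ℕ → En n}
    (hx : Bornology.IsBounded (range x)) (hv : ∀ i, v i ∈ convSubdiff f (x i))
    (hΔ : Tendsto (fun i => ‖x (i + 1) - x i‖) atTop (𝓝 0)) :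
    Tendsto (fun i => f (x (i + 1)) - f (x i) - ⟪v i, x (i + 1) - x i⟫) atTop (𝓝 0) := by
  obtain ⟨R, hR⟩ := (isBounded_iff_subset_closedBall 0).1 hx
  have hxR : ∀ i, ‖x i‖ ≤ R := fun i => mem_closedBall_zero_iff.1 (hR (mem_range_self i))
  obtain ⟨K, hK⟩ := hf.locallyLipschitz.locallyLipschitzOn.exists_lipschitzOnWith_of_compact
    (isCompact_closedBall (0 : En n) (R + 1))
  have hball : ∀ i, closedBall (x i) 1 ⊆ closedBall 0 (R + 1) := fun i =>
    closedBall_subset_closedBall' (by rw [dist_zero_right]; linarith [hxR i])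
  refine squeeze_zero (fun i => ?_) (fun i => convSubdiff_gap_le hK (hball i)
    (hball (i + 1) (mem_closedBall_self zero_le_one)) (hv i))
    (by simpa using hΔ.const_mul (2 * (K : ℝ)))
  linarith [hv i (x (i + 1))]

end ConvexSubgradient

lemma EReal.coe_finset_sum {ι : Type*} (s : Finset ι) (f : ι → ℝ) :
    ((∑ i ∈ s, f i : ℝ) : EReal) = ∑ i ∈ s, (f i : EReal) :=
  map_sum (⟨⟨((↑) : ℝ → EReal), EReal.coe_zero⟩, EReal.coe_add⟩ : ℝ →+ EReal) f s

lemma EConvex1.convexOn_toReal {φ : ℝ → EReal} (hφ : EConvex1 φ)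
    (hfin : ∀ t, φ t ≠ ⊤ ∧ φ t ≠ ⊥) : ConvexOn ℝ univ (fun t => (φ t).toReal) := by
  refine ⟨convex_univ, fun s _ t _ a b ha hb hab => ?_⟩
  have h := hφ s t a b ha hb hab
  rw [← EReal.coe_toReal (hfin s).1 (hfin s).2, ← EReal.coe_toReal (hfin t).1 (hfin t).2,
    ← EReal.coe_mul, ← EReal.coe_mul, ← EReal.coe_add] at h
  simpa only [smul_eq_mul, EReal.toReal_coe] using
    EReal.toReal_le_toReal h (hfin _).2 (EReal.coe_ne_top _)

namespace CP1

variable {n m m₁ : ℕ} (D : CP1 n m m₁)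

lemma tail_nonneg (hA2 : D.A2) (p : Fin m) (k : ℕ) : 0 ≤ D.tail p k :=
  tsum_nonneg fun j => hA2.1 p (k + j)

lemma tail_eq_add_tail_succ (hA2 : D.A2) (p : Fin m) (k : ℕ) :
    D.tail p k = D.αh p k + D.tail p (k + 1) := by
  have hs : Summable fun j => D.αh p (k + j) := by
    simpa [add_comm] using (summable_nat_add_iff k).2 (hA2.2.1 p)
  simp only [tail, hs.tsum_eq_zero_add, add_zero, add_assoc, add_comm 1]

lemma tail_eq_zero (hA2 : D.A2) {p : Fin m} (hp : (p : ℕ) < m₁) (k : ℕ) : D.tail p k = 0 := by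
  simp [tail, hA2.2.2.1 p hp]

lemma fk_add_tail_le_Fupper (hiter : D.IterOK) (p : Fin m) (k i : ℕ) (x : En n) :
    D.fk p k x + D.tail p k ≤ D.Fupper p k i x := by
  have ha := (hiter.2.1 p k i).1 x
  simp only [Fupper, fk]
  linarith

lemma Flower_le_fk (hiter : D.IterOK) (p : Fin m) (k i : ℕ) (x : En n) :
    D.Flower p k i x ≤ D.fk p k x := by
  have hb := (hiter.2.1 p k i).2 x
  simp only [Flower, fk]
  linarith

lemma Fupper_self (p : Fin m) (k i : ℕ) :
    D.Fupper p k i (D.X k i) = D.fk p k (D.X k i) + D.tail p k := by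
  simp only [Fupper, fk, sub_self, inner_zero_right]
  ring

lemma Flower_self (p : Fin m) (k i : ℕ) : D.Flower p k i (D.X k i) = D.fk p k (D.X k i) := by
  simp only [Flower, fk, sub_self, inner_zero_right]
  ring

def TailFeasible (k : ℕ) (x : En n) : Prop :=
  ∀ p : Fin m, m₁ ≤ (p : ℕ) → D.fk p k x + D.tail p k ≤ 0

lemma TailFeasible.mem_Cons {k i : ℕ} (h : D.TailFeasible k (D.X k i)) : D.X k i ∈ D.Cons k i :=
  fun p hp => (D.Fupper_self p k i).trans_le (h p hp)

lemma TailFeasible.X_succ (hiter : D.IterOK) {k i : ℕ} (h : D.TailFeasible k (D.X k i)) :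
    D.TailFeasible k (D.X k (i + 1)) := fun p hp =>
  (D.fk_add_tail_le_Fupper hiter p k i _).trans ((hiter.2.2.1 k i ⟨_, h.mem_Cons⟩).1 p hp)

lemma TailFeasible.mem_Xfeas (hA2 : D.A2) {k : ℕ} {x : En n} (h : D.TailFeasible k x) :
    x ∈ D.Xfeas k := fun p hp => by linarith [h p hp, D.tail_nonneg hA2 p k]

lemma TailFeasible.succ (hA2 : D.A2) {k : ℕ} {x : En n} (h : D.TailFeasible k x) :
    D.TailFeasible (k + 1) x := fun p hp => by
  linarith [hA2.2.2.2.1 p hp k x (h.mem_Xfeas D hA2), h p hp, D.tail_eq_add_tail_succ hA2 p k]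

lemma tailFeasible_X (hA2 : D.A2) (hiter : D.IterOK) (k i : ℕ) :
    D.TailFeasible k (D.X k i) := by
  induction k generalizing i with
  | zero =>
    induction i with
    | zero =>
      intro p hp
      have h0 := hA2.2.2.2.2 p hp
      simp only [hiter.1, tail, zero_add]
      linarith
    | succ i ih => exact ih.X_succ D hiter
  | succ k ihk =>
    induction i with
    | zero => simpa [hiter.2.2.2 k] using (ihk (D.iK k)).succ D hA2
    | succ i ih => exact ih.X_succ D hiter

lemma Cons_nonempty (hA2 : D.A2) (hiter : D.IterOK) (k i : ℕ) : (D.Cons k i).Nonempty :=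
  ⟨_, (D.tailFeasible_X hA2 hiter k i).mem_Cons⟩

def objective (k : ℕ) (x : En n) : ℝ :=
  ∑ p : Fin m, if (p : ℕ) < m₁ then (D.φ p (D.fk p k x)).toReal else 0

lemma coe_objective (hφ : D.PhiOK) (k : ℕ) (x : En n) :
    (D.objective k x : EReal) = ∑ p : Fin m, if (p : ℕ) < m₁ then D.φ p (D.fk p k x) else 0 := by
  rw [objective, EReal.coe_finset_sum]
  refine Finset.sum_congr rfl fun p _ => ?_
  split_ifs with hp
  · exact EReal.coe_toReal ((hφ.1 p hp).1 _).1 ((hφ.1 p hp).1 _).2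
  · rfl

lemma sum_φ_fk_eq_objective (hφ : D.PhiOK) {k : ℕ} {x : En n} (hx : x ∈ D.Xfeas k) :
    ∑ p, D.φ p (D.fk p k x) = D.objective k x := by
  rw [coe_objective D hφ]
  refine Finset.sum_congr rfl fun p _ => ?_
  split_ifs with hp
  · rfl
  · simp [hφ.2 p (not_lt.1 hp), hx p (not_lt.1 hp)]

lemma continuous_fk (hA1 : D.A1) (p : Fin m) (k : ℕ) : Continuous (D.fk p k) :=
  ((hA1 p).1 k).1.locallyLipschitz.continuous.sub ((hA1 p).1 k).2.locallyLipschitz.continuous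

lemma continuous_objective (hφ : D.PhiOK) (hA1 : D.A1) (k : ℕ) :
    Continuous (D.objective k) :=
  continuous_finsetSum _ fun p _ => by
    split_ifs with hp
    · exact ((hφ.1 p hp).2.convexOn_toReal (hφ.1 p hp).1).locallyLipschitz.continuous.comp
        (D.continuous_fk hA1 p k)
    · exact continuous_const

lemma objective_add_le_Obj (hdec : D.DecompOK) (hφ : D.PhiOK) (hA2 : D.A2) (hiter : D.IterOK)
    (k i : ℕ) (x : En n) :
    ((D.objective k x + D.lam / 2 * ‖x - D.X k i‖ ^ 2 : ℝ) : EReal) ≤ D.Obj k i x := by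
  rw [EReal.coe_add, coe_objective D hφ]
  refine add_le_add (Finset.sum_le_sum fun p _ => ?_) le_rfl
  split_ifs
  · obtain ⟨-, -, -, hmono, -, -, -, hanti, hsum, -⟩ := hdec p
    rw [hsum]
    exact add_le_add
      (hmono ((le_add_of_nonneg_right (D.tail_nonneg hA2 p k)).trans
        (D.fk_add_tail_le_Fupper hiter p k i x)))
      (hanti (D.Flower_le_fk hiter p k i x))
  · rfl

lemma Obj_self (hdec : D.DecompOK) (hφ : D.PhiOK) (hA2 : D.A2) (k i : ℕ) :
    D.Obj k i (D.X k i) = D.objective k (D.X k i) := by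
  rw [Obj, coe_objective D hφ, sub_self, norm_zero, zero_pow two_ne_zero, mul_zero,
    EReal.coe_zero, add_zero]
  refine Finset.sum_congr rfl fun p _ => ?_
  split_ifs with hp
  · obtain ⟨-, -, -, -, -, -, -, -, hsum, -⟩ := hdec p
    rw [D.Fupper_self, D.Flower_self, D.tail_eq_zero hA2 hp, add_zero, hsum]
  · rfl

lemma objective_X_succ_add_le (hdec : D.DecompOK) (hφ : D.PhiOK) (hA2 : D.A2)
    (hiter : D.IterOK) (k i : ℕ) :
    D.objective k (D.X k (i + 1)) + D.lam / 2 * ‖D.X k (i + 1) - D.X k i‖ ^ 2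
      ≤ D.objective k (D.X k i) := by
  have hmin := (hiter.2.2.1 k i (D.Cons_nonempty hA2 hiter k i)).2 _
    (D.tailFeasible_X hA2 hiter k i).mem_Cons
  exact_mod_cast (D.objective_add_le_Obj hdec hφ hA2 hiter k i _).trans
    (hmin.trans_eq (D.Obj_self hdec hφ hA2 k i))

lemma isBounded_range_X (hdec : D.DecompOK) (hφ : D.PhiOK) (hA2 : D.A2) (hA4 : D.A4)
    (hpar : D.ParamsOK) (hiter : D.IterOK) (k : ℕ) : Bornology.IsBounded (range (D.X k)) := by
  have hanti : Antitone fun i => D.objective k (D.X k i) := antitone_nat_of_succ_le fun i => by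
    nlinarith [D.objective_X_succ_add_le hdec hφ hA2 hiter k i, hpar.1,
      sq_nonneg ‖D.X k (i + 1) - D.X k i‖]
  refine (hA4 k (D.objective k (D.X k 0))).subset ?_
  rintro _ ⟨i, rfl⟩
  rw [mem_ofPred_eq,
    D.sum_φ_fk_eq_objective hφ ((D.tailFeasible_X hA2 hiter k i).mem_Xfeas D hA2)]
  exact EReal.coe_le_coe_iff.2 (hanti (Nat.zero_le i))

lemma tendsto_norm_X_succ_sub (hdec : D.DecompOK) (hφ : D.PhiOK) (hA1 : D.A1) (hA2 : D.A2)
    (hA4 : D.A4) (hpar : D.ParamsOK) (hiter : D.IterOK) (k : ℕ) :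
    Tendsto (fun i => ‖D.X k (i + 1) - D.X k i‖) atTop (𝓝 0) := by
  have hbdd : BddBelow (range fun i => D.objective k (D.X k i)) := by
    refine ((D.isBounded_range_X hdec hφ hA2 hA4 hpar hiter k).isCompact_closure.bddBelow_image
      (D.continuous_objective hφ hA1 k).continuousOn).mono ?_
    rintro _ ⟨i, rfl⟩
    exact ⟨D.X k i, subset_closure (mem_range_self i), rfl⟩
  exact tendsto_zero_of_sufficient_decrease (half_pos hpar.1) (fun _ => norm_nonneg _)
    (D.objective_X_succ_add_le hdec hφ hA2 hiter k) hbdd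

lemma exists_Stop (hφ : D.PhiOK) (hdec : D.DecompOK) (hA1 : D.A1) (hA2 : D.A2) (hA3 : D.A3)
    (hA4 : D.A4) (hpar : D.ParamsOK) (hiter : D.IterOK) (k : ℕ) : ∃ i, D.Stop k i := by
  have hΔ := D.tendsto_norm_X_succ_sub hdec hφ hA1 hA2 hA4 hpar hiter k
  have hX := D.isBounded_range_X hdec hφ hA2 hA4 hpar hiter k
  have hε := (hpar.2.1 k).1
  have hupper : ∀ p, ∀ᶠ i in atTop,
      D.Fupper p k i (D.X k (i + 1)) ≤ D.fk p k (D.X k (i + 1)) + D.tail p k + D.eps k :=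
    fun p => ((tendsto_convSubdiff_gap ((hA1 p).1 k).2 hX (fun i => (hiter.2.1 p k i).1)
      hΔ).eventually (gt_mem_nhds hε)).mono fun i hi => by simp only [Fupper, fk]; linarith
  have hlower : ∀ p, ∀ᶠ i in atTop,
      D.fk p k (D.X k (i + 1)) - D.eps k ≤ D.Flower p k i (D.X k (i + 1)) :=
    fun p => ((tendsto_convSubdiff_gap ((hA1 p).1 k).1 hX (fun i => (hiter.2.1 p k i).2)
      hΔ).eventually (gt_mem_nhds hε)).mono fun i hi => by simp only [Flower, fk]; linarith
  have hstep : ∀ᶠ i in atTop, ‖D.X k (i + 1) - D.X k i‖ ≤ D.del k / (D.lam + D.ell k) :=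
    hΔ.eventually (ge_mem_nhds (div_pos (hpar.2.1 k).2 (add_pos hpar.1 (hA3 k).1)))
  obtain ⟨i, hu, hl, hs⟩ :=
    ((eventually_all.2 hupper).and ((eventually_all.2 hlower).and hstep)).exists
  exact ⟨i, hu, fun p _ => hl p, hs⟩

end CP1

theorem stmt9_general {n m m₁ : ℕ} (D : CP1 n m m₁)
    (hφ : D.PhiOK)
    (hdec : D.DecompOK)
    (hA1 : D.A1) (hA2 : D.A2) (hA3 : D.A3) (hA4 : D.A4)
    (hpar : D.ParamsOK) (hiter : D.IterOK) :
    (∀ k i : ℕ, (D.Cons k i).Nonempty) ∧ (∀ k : ℕ, ∃ i : ℕ, D.Stop k i) :=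
  ⟨D.Cons_nonempty hA2 hiter, D.exists_Stop hφ hdec hA1 hA2 hA3 hA4 hpar hiter⟩

/-- convergence of the inner loop of the prox-ADC method.
Under Assumptions 1–4: (a) the strongly convex subproblem defining `x^{k,i+1}` is feasible
for every `k, i`; and (b) for every `k` the inner stopping rule is achieved in finitely many
steps, i.e. there exists an index `i` satisfying the stopping conditions (so the smallest
such index `i_k` is finite). -/
theorem stmt9 {n m m₁ : ℕ} (D : CP1 n m m₁) (hm : m₁ ≤ m)
    (hφ : D.PhiOK)
    (hφconv : ∀ p, Proper1 (D.φ p) ∧ LowerSemicontinuous (D.φ p) ∧ EConvex1 (D.φ p))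
    (hdec : D.DecompOK)
    (hA1 : D.A1) (hA2 : D.A2) (hA3 : D.A3) (hA4 : D.A4)
    (hpar : D.ParamsOK) (hiter : D.IterOK)
    (hiK : ∀ k i, D.Stop k i → D.Stop k (D.iK k) ∧ D.iK k ≤ i) :
    (∀ k i : ℕ, (D.Cons k i).Nonempty) ∧ (∀ k : ℕ, ∃ i : ℕ, D.Stop k i) :=
  stmt9_general D hφ hdec hA1 hA2 hA3 hA4 hpar hiter
end
end
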